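/- arXiv:2307.15914 — 12 statements merged into one kernel-verified Lean document; each statement's English description precedes it below -/
import Mathlib

section
/- If a field K has a unique minimal nontrivial finite extension K' inside a fixed algebraic closure, then the extension K'/K is finite and normal. -/
open IntermediateField

/-- The anti-closure of `K`: the intersection of all finite nontrivial extensions of `K`
inside a fixed algebraic closure. -/
noncomputable def antiClosure (K : Type*) [Field K] :
    IntermediateField K (AlgebraicClosure K) :=
  ⨅ L ∈ {L : IntermediateField K (AlgebraicClosure K) |
      L ≠ ⊥ ∧ FiniteDimensional K L}, L

theorem antiClosure_finite_and_normal (K : Type*) [Field K]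
    (h : antiClosure K ≠ ⊥) :
    FiniteDimensional K (antiClosure K) ∧ Normal K (antiClosure K) := by
  -- get an element outside ⊥
  obtain ⟨x, hx, hxb⟩ := SetLike.exists_of_lt (show (⊥ : IntermediateField K (AlgebraicClosure K)) < antiClosure K from bot_lt_iff_ne_bot.mpr h)
  have hxint : IsIntegral K x := Algebra.IsIntegral.isIntegral x
  have hfd : FiniteDimensional K K⟮x⟯ := IntermediateField.adjoin.finiteDimensional hxint
  have hne : K⟮x⟯ ≠ ⊥ := by
    intro hb
    exact hxb (hb ▸ IntermediateField.mem_adjoin_simple_self K x)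
  have hmem : K⟮x⟯ ∈ {L : IntermediateField K (AlgebraicClosure K) |
      L ≠ ⊥ ∧ FiniteDimensional K L} := ⟨hne, hfd⟩
  have hle : antiClosure K ≤ K⟮x⟯ := biInf_le _ hmem
  have hfin : FiniteDimensional K (antiClosure K) :=
    FiniteDimensional.of_injective (IntermediateField.inclusion hle).toLinearMap
      (IntermediateField.inclusion hle).injective
  refine ⟨hfin, ?_⟩
  rw [normal_iff_forall_map_le']
  intro σ
  refine le_iInf fun L => le_iInf fun hL => ?_
  have hL' : L.map σ.symm.toAlgHom ∈ {L : IntermediateField K (AlgebraicClosure K) |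
      L ≠ ⊥ ∧ FiniteDimensional K L} := by
    constructor
    · intro hb
      apply hL.1
      have hb' : L.map σ.symm.toAlgHom = (⊥ : IntermediateField K (AlgebraicClosure K)).map σ.symm.toAlgHom := by
        rw [hb, IntermediateField.map_bot]
      exact IntermediateField.map_injective _ hb' 
    · have e := IntermediateField.intermediateFieldMap σ.symm L
      have := hL.2
      exact LinearEquiv.finiteDimensional e.toLinearEquiv
  have h1 : antiClosure K ≤ L.map σ.symm.toAlgHom := biInf_le _ hL'
  intro y hy
  rw [← SetLike.mem_coe, IntermediateField.coe_map] at hy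
  obtain ⟨z, hz, rfl⟩ := hy
  have hz' := h1 hz
  rw [← SetLike.mem_coe, IntermediateField.coe_map] at hz'
  obtain ⟨w, hw, hwz⟩ := hz'
  rw [← hwz]
  simpa using hw
end

section
/- If a field K satisfies K' ≠ K (unique minimal extension) and K is not perfect, then K is separably closed. -/
open IntermediateField

theorem sepClosed_of_antiClosure_ne_of_not_perfect (K : Type*) [Field K]
    (h : antiClosure K ≠ ⊥) (p : ℕ) [Fact p.Prime] [CharP K p]
    (hK : ¬ Function.Surjective (frobenius K p)) :
    IsSepClosed K := by
  classical
  set A := AlgebraicClosure K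
  have hp : p.Prime := Fact.out
  haveI : ExpChar K p := ExpChar.prime hp
  -- a purely inseparable element
  obtain ⟨a, ha⟩ := not_forall.mp hK
  obtain ⟨x, hx⟩ := IsAlgClosed.exists_pow_nat_eq (algebraMap K A a) hp.pos
  have hxint : IsIntegral K x := (Algebra.IsAlgebraic.isAlgebraic (R := K) x).isIntegral
  have hxbot : x ∉ (⊥ : IntermediateField K A) := by
    rintro ⟨y, hy⟩
    have hy' : algebraMap K A y = x := hy
    exact ha ⟨y, (algebraMap K A).injective (by
      rw [frobenius_def, map_pow, hy', hx])⟩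
  have hinf1 : antiClosure K ≤ K⟮x⟯ := by
    refine iInf₂_le K⟮x⟯ ⟨?_, adjoin.finiteDimensional hxint⟩
    intro hbot
    exact hxbot (adjoin_simple_eq_bot_iff.mp hbot)
  have hPI : antiClosure K ≤ perfectClosure K A := by
    refine hinf1.trans (adjoin_simple_le_iff.mpr ?_)
    exact (mem_perfectClosure_iff_pow_mem p).mpr ⟨1, by rw [pow_one, hx]; exact ⟨a, rfl⟩⟩
  haveI : IsPurelyInseparable K (antiClosure K) :=
    (le_perfectClosure_iff K A _).mp hPI
  -- now suppose K is not separably closed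
  by_contra hsc
  have hne : separableClosure K A ≠ ⊥ := fun hb ↦
    hsc ((IsSepClosed.separableClosure_eq_bot_iff K A).mp hb)
  have hex : ∃ y ∈ separableClosure K A, y ∉ (⊥ : IntermediateField K A) := by
    by_contra hc
    push_neg at hc
    exact hne (le_antisymm (fun z hz ↦ hc z hz) bot_le)
  obtain ⟨y, hy, hybot⟩ := hex
  have hyint : IsIntegral K y := (Algebra.IsAlgebraic.isAlgebraic (R := K) y).isIntegral
  have hinf2 : antiClosure K ≤ K⟮y⟯ := by
    refine iInf₂_le K⟮y⟯ ⟨?_, adjoin.finiteDimensional hyint⟩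
    intro hbot
    exact hybot (adjoin_simple_eq_bot_iff.mp hbot)
  have hSep : antiClosure K ≤ separableClosure K A :=
    hinf2.trans (adjoin_simple_le_iff.mpr hy)
  haveI : Algebra.IsSeparable K (antiClosure K) :=
    (le_separableClosure_iff K A _).mp hSep
  exact h (IntermediateField.eq_bot_of_isPurelyInseparable_of_isSeparable _)
end

section
/- If a field K satisfies K' ≠ K, then the degree [K' : K] is a prime number. -/
open IntermediateField

open Polynomial

section Aux

variable (K : Type*) [Field K]

/-- The anti-closure is contained in every nontrivial finite extension. -/
lemma antiClosure_le {L : IntermediateField K (AlgebraicClosure K)} (h1 : L ≠ ⊥)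
    (h2 : FiniteDimensional K L) : antiClosure K ≤ L :=
  iInf₂_le L ⟨h1, h2⟩

lemma finrank_congr_aux {F E : IntermediateField K (AlgebraicClosure K)} (hFE : F = E) :
    Module.finrank K F = Module.finrank K E :=
  (IntermediateField.equivOfEq hFE).toLinearEquiv.finrank_eq

/-- If the anti-closure is nontrivial, it is finite dimensional. -/
lemma antiClosure_fd (h : antiClosure K ≠ ⊥) : FiniteDimensional K (antiClosure K) := by
  obtain ⟨x, hx⟩ : ∃ x : AlgebraicClosure K, x ∉ (⊥ : IntermediateField K (AlgebraicClosure K)) := by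
    by_contra hall
    push_neg at hall
    exact h (eq_bot_iff.2 fun x _ => hall x)
  have hint : IsIntegral K x := Algebra.IsIntegral.isIntegral x
  have hfd : FiniteDimensional K K⟮x⟯ := adjoin.finiteDimensional hint
  have hne : K⟮x⟯ ≠ ⊥ := fun hb => hx (hb ▸ mem_adjoin_simple_self K x)
  have hle := antiClosure_le K hne hfd
  exact FiniteDimensional.of_injective (IntermediateField.inclusion hle).toLinearMap
    (IntermediateField.inclusion hle).toRingHom.injective

/-- Any subfield of the anti-closure is trivial or everything. -/
lemma antiClosure_min (h : antiClosure K ≠ ⊥)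
    {F : IntermediateField K (AlgebraicClosure K)} (hF : F ≤ antiClosure K) :
    F = ⊥ ∨ F = antiClosure K := by
  rcases eq_or_ne F ⊥ with hb | hb
  · exact Or.inl hb
  · haveI := antiClosure_fd K h
    have hfd : FiniteDimensional K F :=
      FiniteDimensional.of_injective (IntermediateField.inclusion hF).toLinearMap
        (IntermediateField.inclusion hF).toRingHom.injective
    exact Or.inr (le_antisymm hF (antiClosure_le K hb hfd))

/-- Every element of the anti-closure not in the base field generates it. -/
lemma antiClosure_adjoin (h : antiClosure K ≠ ⊥) {x : AlgebraicClosure K}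
    (hxA : x ∈ antiClosure K) (hx : x ∉ (⊥ : IntermediateField K (AlgebraicClosure K))) :
    K⟮x⟯ = antiClosure K := by
  have hle : K⟮x⟯ ≤ antiClosure K := adjoin_simple_le_iff.2 hxA
  rcases antiClosure_min K h hle with hb | he
  · exact absurd (hb ▸ mem_adjoin_simple_self K x) hx
  · exact he

lemma antiClosure_one_lt_finrank (h : antiClosure K ≠ ⊥) :
    1 < Module.finrank K (antiClosure K) := by
  haveI := antiClosure_fd K h
  rcases lt_or_ge 1 (Module.finrank K (antiClosure K)) with h1 | h1
  · exact h1
  · exfalso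
    have hpos : 0 < Module.finrank K (antiClosure K) := Module.finrank_pos
    have h1' : Module.finrank K (antiClosure K) = 1 := le_antisymm h1 hpos
    exact h (IntermediateField.finrank_eq_one_iff.1 h1')

/-- The anti-closure is a normal extension. -/
lemma antiClosure_normal (h : antiClosure K ≠ ⊥) : Normal K (antiClosure K) := by
  haveI := antiClosure_fd K h
  rw [normal_iff]
  intro x
  have hαint : IsIntegral K (x : AlgebraicClosure K) := Algebra.IsIntegral.isIntegral _
  have hxint : IsIntegral K x := isIntegral_iff.2 hαint
  refine ⟨hxint, ?_⟩
  have hmp : minpoly K (x : AlgebraicClosure K) = minpoly K x :=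
    minpoly.algebraMap_eq (algebraMap (antiClosure K) (AlgebraicClosure K)).injective x
  rw [← hmp]
  refine IntermediateField.splits_of_splits (IsAlgClosed.splits _) ?_
  intro β hβ
  rw [mem_rootSet] at hβ
  by_cases hα : (x : AlgebraicClosure K) ∈ (⊥ : IntermediateField K (AlgebraicClosure K))
  · obtain ⟨c, hc⟩ := IntermediateField.mem_bot.1 hα
    have : minpoly K (x : AlgebraicClosure K) = X - C c := by
      rw [← hc]; exact minpoly.eq_X_sub_C _ _
    rw [this] at hβ
    have : β = algebraMap K (AlgebraicClosure K) c := by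
      have := hβ.2
      simpa [sub_eq_zero] using this
    rw [this]
    exact (antiClosure K).algebraMap_mem c
  · -- the root generates a field of the same degree containing the anti-closure
    have hirr := minpoly.irreducible hαint
    have hβint : IsIntegral K β := Algebra.IsIntegral.isIntegral β
    have hmβ : minpoly K β = minpoly K (x : AlgebraicClosure K) :=
      (minpoly.eq_of_irreducible_of_monic hirr hβ.2 (minpoly.monic hαint)).symm
    have hAeq : K⟮(x : AlgebraicClosure K)⟯ = antiClosure K :=
      antiClosure_adjoin K h x.2 hα
    have hfrA : Module.finrank K (antiClosure K) =
        (minpoly K (x : AlgebraicClosure K)).natDegree := by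
      rw [← finrank_congr_aux K hAeq]; exact adjoin.finrank hαint
    have hfrβ : Module.finrank K K⟮β⟯ = (minpoly K (x : AlgebraicClosure K)).natDegree := by
      rw [adjoin.finrank hβint, hmβ]
    haveI hfdβ : FiniteDimensional K K⟮β⟯ := adjoin.finiteDimensional hβint
    have hβne : K⟮β⟯ ≠ ⊥ := by
      intro hb
      have h1 : Module.finrank K K⟮β⟯ = 1 := by
        rw [hb, IntermediateField.finrank_bot]
      have := antiClosure_one_lt_finrank K h
      omega
    have hle : antiClosure K ≤ K⟮β⟯ := antiClosure_le K hβne hfdβ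
    have heq : antiClosure K = K⟮β⟯ :=
      IntermediateField.eq_of_le_of_finrank_le hle (by rw [hfrβ, hfrA])
    rw [heq]
    exact mem_adjoin_simple_self K β

end Aux

/-- A nontrivial finite group all of whose subgroups are trivial has prime order. -/
lemma card_prime_of_trivial_subgroups {G : Type*} [Group G] [Fintype G]
    (h1 : 1 < Fintype.card G) (hsub : ∀ H : Subgroup G, H = ⊥ ∨ H = ⊤) :
    Nat.Prime (Fintype.card G) := by
  set n := Fintype.card G with hn
  have hp : Nat.Prime n.minFac := Nat.minFac_prime (by omega)
  haveI := Fact.mk hp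
  obtain ⟨g, hg⟩ := exists_prime_orderOf_dvd_card n.minFac n.minFac_dvd
  rcases hsub (Subgroup.zpowers g) with hb | ht
  · have : g = 1 := Subgroup.zpowers_eq_bot.1 hb
    rw [this, orderOf_one] at hg
    exact absurd hg.symm hp.ne_one
  · have hcard : Nat.card (Subgroup.zpowers g) = orderOf g := Nat.card_zpowers g
    rw [ht] at hcard
    have : Nat.card G = orderOf g := by
      rw [← hcard]
      exact (Nat.card_congr Subgroup.topEquiv.toEquiv).symm
    rw [Nat.card_eq_fintype_card] at this
    rw [hn, this, hg]
    exact hp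

theorem antiClosure_finrank_prime (K : Type*) [Field K]
    (h : antiClosure K ≠ ⊥) :
    Nat.Prime (Module.finrank K (antiClosure K)) := by
  haveI := antiClosure_fd K h
  have h1 := antiClosure_one_lt_finrank K h
  -- the image of a subfield of the anti-closure inside the big field
  have hmaple : ∀ F : IntermediateField K (antiClosure K),
      F.map (antiClosure K).val ≤ antiClosure K := by
    rintro F x ⟨y, _, rfl⟩
    exact y.2
  have hmaptop : (⊤ : IntermediateField K (antiClosure K)).map (antiClosure K).val
      = antiClosure K := by
    apply le_antisymm (hmaple ⊤)
    intro x hx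
    exact ⟨⟨x, hx⟩, trivial, rfl⟩
  have hkey : ∀ F : IntermediateField K (antiClosure K), F = ⊥ ∨ F = ⊤ := by
    intro F
    rcases antiClosure_min K h (hmaple F) with hb | ht
    · left
      apply IntermediateField.map_injective (antiClosure K).val
      rw [hb, IntermediateField.map_bot]
    · right
      apply IntermediateField.map_injective (antiClosure K).val
      rw [ht, hmaptop]
  haveI hnormal := antiClosure_normal K h
  rcases hkey (separableClosure K (antiClosure K)) with hbot | htop
  · -- purely inseparable case
    haveI : Algebra.IsAlgebraic K (antiClosure K) := Algebra.IsAlgebraic.of_finite _ _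
    haveI hpi : IsPurelyInseparable K (antiClosure K) := separableClosure.eq_bot_iff.1 hbot
    set q := ringExpChar K with hq
    haveI : ExpChar K q := inferInstance
    obtain ⟨α, hαA, hα⟩ : ∃ α ∈ antiClosure K,
        α ∉ (⊥ : IntermediateField K (AlgebraicClosure K)) :=
      SetLike.exists_of_lt (bot_lt_iff_ne_bot.2 h)
    set x : antiClosure K := ⟨α, hαA⟩ with hxdef
    obtain ⟨n, y, hmin⟩ := IsPurelyInseparable.minpoly_eq_X_pow_sub_C K q x
    have hmp : minpoly K α = minpoly K x :=
      minpoly.algebraMap_eq (algebraMap (antiClosure K) (AlgebraicClosure K)).injective x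
    have hminα : minpoly K α = X ^ q ^ n - C y := by rw [hmp, hmin]
    have hαint : IsIntegral K α := Algebra.IsIntegral.isIntegral α
    have hfr : Module.finrank K (antiClosure K) = q ^ n := by
      rw [← finrank_congr_aux K (antiClosure_adjoin K h hαA hα), adjoin.finrank hαint, hminα,
        natDegree_X_pow_sub_C]
    have hqn1 : 1 < q ^ n := hfr ▸ h1
    have hq2 : 2 ≤ q := by
      rcases expChar_is_prime_or_one K q with hp | h1'
      · exact hp.two_le
      · rw [h1', one_pow] at hqn1; omega
    have hn1 : 1 ≤ n := by
      by_contra hn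
      push_neg at hn
      interval_cases n
      simp at hqn1
    have hqprime : Nat.Prime q := by
      rcases expChar_is_prime_or_one K q with hp | h1'
      · exact hp
      · omega
    -- α^q generates a smaller field, hence lies in the base field
    have hαqn : α ^ q ^ n = algebraMap K (AlgebraicClosure K) y := by
      have := minpoly.aeval K α
      rw [hminα] at this
      simpa [sub_eq_zero] using this
    set β := α ^ q with hβdef
    have hβint : IsIntegral K β := Algebra.IsIntegral.isIntegral β
    have hβroot : (aeval β) (X ^ q ^ (n - 1) - C y) = 0 := by
      have hpow : β ^ q ^ (n - 1) = α ^ q ^ n := by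
        rw [hβdef, ← pow_mul, ← pow_succ', Nat.sub_add_cancel hn1]
      rw [map_sub, map_pow, aeval_X, aeval_C, hpow, hαqn, sub_self]
    have hgne : (X ^ q ^ (n - 1) - C y : Polynomial K) ≠ 0 :=
      (monic_X_pow_sub_C y (by positivity)).ne_zero
    have hβdeg : (minpoly K β).natDegree ≤ q ^ (n - 1) := by
      have := minpoly.degree_le_of_ne_zero K β hgne hβroot
      have h2 := natDegree_le_natDegree this
      rwa [natDegree_X_pow_sub_C] at h2
    have hβlt : Module.finrank K K⟮β⟯ < Module.finrank K (antiClosure K) := by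
      rw [adjoin.finrank hβint, hfr]
      calc (minpoly K β).natDegree ≤ q ^ (n - 1) := hβdeg
        _ < q ^ n := by
          apply Nat.pow_lt_pow_right (by omega)
          omega
    have hβA : β ∈ antiClosure K := pow_mem hαA q
    have hβle : K⟮β⟯ ≤ antiClosure K := adjoin_simple_le_iff.2 hβA
    have hβbot : K⟮β⟯ = ⊥ := by
      rcases antiClosure_min K h hβle with hb | he
      · exact hb
      · rw [he] at hβlt; omega
    obtain ⟨c, hc⟩ : ∃ c, algebraMap K (AlgebraicClosure K) c = β :=
      IntermediateField.mem_bot.1 (hβbot ▸ mem_adjoin_simple_self K β)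
    -- now the minimal polynomial of α divides X^q - C c
    have hroot2 : (aeval α) (X ^ q - C c : Polynomial K) = 0 := by
      simp [hc, hβdef, sub_eq_zero]
    have hne2 : (X ^ q - C c : Polynomial K) ≠ 0 :=
      (monic_X_pow_sub_C c (by omega)).ne_zero
    have hdeg2 : (minpoly K α).natDegree ≤ q := by
      have := minpoly.degree_le_of_ne_zero K α hne2 hroot2
      have h2 := natDegree_le_natDegree this
      rwa [natDegree_X_pow_sub_C] at h2
    have hdegα : (minpoly K α).natDegree = q ^ n := by
      rw [hminα, natDegree_X_pow_sub_C]
    have hn : n = 1 := by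
      by_contra hne
      have : 2 ≤ n := by omega
      have : q ^ 2 ≤ q ^ n := Nat.pow_le_pow_right (by omega) this
      nlinarith [sq_nonneg q]
    rw [hfr, hn, pow_one]
    exact hqprime
  · -- separable (Galois) case
    haveI hsep : Algebra.IsSeparable K (antiClosure K) := (separableClosure.eq_top_iff K (antiClosure K)).1 htop
    haveI : IsGalois K (antiClosure K) := ⟨⟩
    have hcard := IsGalois.card_aut_eq_finrank K (antiClosure K)
    rw [← hcard, Nat.card_eq_fintype_card]
    apply card_prime_of_trivial_subgroups
    · rw [← Nat.card_eq_fintype_card, hcard]; exact h1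
    · intro H
      have hfH := hkey (IntermediateField.fixedField H)
      rcases hfH with hb | ht
      · right
        rw [← IntermediateField.fixingSubgroup_fixedField H, hb,
          IntermediateField.fixingSubgroup_bot]
      · left
        rw [← IntermediateField.fixingSubgroup_fixedField H, ht,
          IntermediateField.fixingSubgroup_top]
end

section
/- If K is a field with K' ≠ K, K is not perfect, and p = char(K) > 0, then [K' : K] = p. -/
open IntermediateField

theorem antiClosure_finrank_eq_char_of_not_perfect (K : Type*) [Field K]
    (h : antiClosure K ≠ ⊥) (p : ℕ) [Fact p.Prime] [CharP K p]
    (hK : ¬ Function.Surjective (frobenius K p)) :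
    Module.finrank K (antiClosure K) = p := by
  have hp : p.Prime := Fact.out
  rw [Function.Surjective, not_forall] at hK
  obtain ⟨a, ha⟩ := hK
  push_neg at ha
  have ha' : ∀ b : K, b ^ p ≠ a := fun b => by simpa [frobenius_def] using ha b
  have hirr : Irreducible (Polynomial.X ^ p - Polynomial.C a) :=
    X_pow_sub_C_irreducible_of_prime hp ha'
  obtain ⟨r, hr⟩ := IsAlgClosed.exists_pow_nat_eq (k := AlgebraicClosure K)
    (algebraMap K _ a) hp.pos
  have hroot : Polynomial.aeval r (Polynomial.X ^ p - Polynomial.C a) = 0 := by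
    simp [hr]
  have hmin : minpoly K r = Polynomial.X ^ p - Polynomial.C a :=
    (minpoly.eq_of_irreducible_of_monic hirr hroot
      (Polynomial.monic_X_pow_sub_C a hp.ne_zero)).symm
  have hint : IsIntegral K r := Algebra.IsIntegral.isIntegral r
  have hfinL : Module.finrank K K⟮r⟯ = p := by
    rw [IntermediateField.adjoin.finrank hint, hmin,
      Polynomial.natDegree_X_pow_sub_C]
  have hLbot : K⟮r⟯ ≠ ⊥ := by
    intro hbot
    rw [← IntermediateField.finrank_eq_one_iff] at hbot
    rw [hbot] at hfinL
    exact hp.one_lt.ne hfinL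
  have hLfd : FiniteDimensional K K⟮r⟯ :=
    IntermediateField.adjoin.finiteDimensional hint
  have hle : antiClosure K ≤ K⟮r⟯ := by
    refine iInf_le_of_le K⟮r⟯ ?_
    exact iInf_le_of_le ⟨hLbot, hLfd⟩ le_rfl
  have hdvd : Module.finrank K (antiClosure K) ∣ Module.finrank K K⟮r⟯ :=
    dvd_of_mul_right_eq _ (IntermediateField.finrank_bot_mul_relfinrank hle)
  rw [hfinL] at hdvd
  rcases (Nat.Prime.eq_one_or_self_of_dvd hp _ hdvd) with h1 | h1
  · exact absurd (IntermediateField.finrank_eq_one_iff.mp h1) h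
  · exact h1
end

section
/- If K is a perfect field with K' ≠ K and p = [K' : K], then every finite extension of K has degree a power of p. -/
set_option maxHeartbeats 1000000
set_option synthInstance.maxHeartbeats 400000

open IntermediateField



lemma aux_group_lemma {G : Type*} [Group G] [Finite G] (N : Subgroup G) (hN : N ≠ ⊤)
    (hmax : ∀ H : Subgroup G, H ≠ ⊤ → H ≤ N) :
    N.index.Prime ∧ ∃ k, Nat.card G = N.index ^ k := by
  classical
  set m := Nat.card G with hm
  have hm0 : m ≠ 0 := Nat.card_pos.ne'
  -- G is cyclic generated by any g ∉ N
  obtain ⟨g, hg⟩ : ∃ g : G, g ∉ N := by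
    by_contra h'
    push_neg at h'
    exact hN (Subgroup.eq_top_iff' N |>.mpr h')
  have hgen : Subgroup.zpowers g = ⊤ := by
    by_contra h'
    exact hg (hmax _ h' (Subgroup.mem_zpowers g))
  have horder : orderOf g = m := by
    rw [← Nat.card_zpowers, hgen, hm]
    exact Nat.card_congr (Equiv.subtypeUnivEquiv (fun x => Subgroup.mem_top x))
  have hidx1 : N.index ≠ 1 := fun e => hN (Subgroup.index_eq_one.mp e)
  have hcardmul : Nat.card N * N.index = m := Subgroup.card_mul_index N
  have key : ∀ q : ℕ, q.Prime → q ∣ m → q = N.index := by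
    intro q hq hqm
    have hq0 : q ≠ 0 := hq.ne_zero
    have horderpow : orderOf (g ^ q) = m / q := by
      rw [orderOf_pow, horder, Nat.gcd_eq_right hqm]
    have hHne : Subgroup.zpowers (g ^ q) ≠ ⊤ := by
      intro e
      have : Nat.card (Subgroup.zpowers (g ^ q)) = m := by
        rw [e, hm]
        exact Nat.card_congr (Equiv.subtypeUnivEquiv (fun x => Subgroup.mem_top x))
      rw [Nat.card_zpowers, horderpow] at this
      have : m / q < m := Nat.div_lt_self (Nat.pos_of_ne_zero hm0) hq.one_lt
      omega
    have hle : Subgroup.zpowers (g ^ q) ≤ N := hmax _ hHne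
    have hdvd : m / q ∣ Nat.card N := by
      have := Subgroup.card_dvd_of_le hle
      rwa [Nat.card_zpowers, horderpow] at this
    obtain ⟨t, ht⟩ := hdvd
    have hmq : m / q * q = m := Nat.div_mul_cancel hqm
    have : m / q * (t * N.index) = m / q * q := by
      rw [← mul_assoc, ← ht, hcardmul, hmq]
    have hq' : t * N.index = q := by
      have hmq0 : m / q ≠ 0 := by
        intro e; rw [e, zero_mul] at hmq; omega
      exact Nat.eq_of_mul_eq_mul_left (Nat.pos_of_ne_zero hmq0) this
    have : N.index ∣ q := Dvd.intro_left t hq'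
    exact ((hq.eq_one_or_self_of_dvd _ this).resolve_left hidx1).symm
  have hm1 : m ≠ 1 := by
    intro e
    have h2 : Nat.card N * N.index = 1 := by rw [hcardmul, e]
    exact hidx1 (Nat.eq_one_of_mul_eq_one_left h2)
  obtain ⟨q, hq, hqm⟩ := Nat.exists_prime_and_dvd hm1
  have hp : N.index.Prime := key q hq hqm ▸ hq
  refine ⟨hp, ?_⟩
  exact ⟨_, Nat.eq_prime_pow_of_unique_prime_dvd hm0 (fun {d} hd hdm => key d hd hdm)⟩

theorem finrank_pow_of_antiClosure_ne (K : Type*) [Field K] [PerfectField K]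
    (h : antiClosure K ≠ ⊥) (p : ℕ) (hp : p = Module.finrank K (antiClosure K))
    (L : Type*) [Field L] [Algebra K L] [FiniteDimensional K L] :
    ∃ n : ℕ, Module.finrank K L = p ^ n := by
  classical
  have hle : ∀ F : IntermediateField K (AlgebraicClosure K), F ≠ ⊥ → FiniteDimensional K F →
      antiClosure K ≤ F := fun F h1 h2 => biInf_le _ ⟨h1, h2⟩
  by_cases hL1 : Module.finrank K L = 1
  · exact ⟨0, by simpa using hL1⟩
  have halg : Algebra.IsAlgebraic K L := Algebra.IsAlgebraic.of_finite K L
  let f : L →ₐ[K] AlgebraicClosure K := IsAlgClosed.lift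
  let F : IntermediateField K (AlgebraicClosure K) := f.fieldRange
  have hFL : Module.finrank K L = Module.finrank K F :=
    (AlgEquiv.ofInjectiveField f).toLinearEquiv.finrank_eq
  have hFfin : FiniteDimensional K F :=
    LinearEquiv.finiteDimensional (AlgEquiv.ofInjectiveField f).toLinearEquiv
  have hFbot : F ≠ ⊥ := by
    intro e
    rw [e, IntermediateField.finrank_bot] at hFL
    exact hL1 hFL
  set M := normalClosure K F (AlgebraicClosure K) with hM
  have hFM : F ≤ M := le_normalClosure F
  have hMfin : FiniteDimensional K M := inferInstance
  have hMgal : IsGalois K M := inferInstance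
  have hMbot : M ≠ ⊥ := by
    intro e
    exact hFbot (le_bot_iff.mp (e ▸ hFM))
  have hK'M : antiClosure K ≤ M := hle M hMbot hMfin
  set E' : IntermediateField K M := IntermediateField.restrict hK'M with hE'
  have hfinE' : Module.finrank K E' = Module.finrank K (antiClosure K) :=
    ((IntermediateField.restrict_algEquiv hK'M).toLinearEquiv.finrank_eq).symm
  set N : Subgroup (M ≃ₐ[K] M) := IntermediateField.fixingSubgroup E' with hN
  have hNtop : N ≠ ⊤ := by
    intro e
    have hE'bot : E' = ⊥ := by
      conv_lhs => rw [← IsGalois.fixedField_fixingSubgroup E']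
      rw [← hN, e, ← IntermediateField.fixingSubgroup_bot,
        IsGalois.fixedField_fixingSubgroup]
    have : antiClosure K = ⊥ := by
      have := IntermediateField.lift_restrict hK'M
      rw [← hE', hE'bot, IntermediateField.lift_bot] at this
      exact this.symm
    exact h this
  have hmaxN : ∀ H : Subgroup (M ≃ₐ[K] M), H ≠ ⊤ → H ≤ N := by
    intro H hH
    have hffbot : IntermediateField.fixedField H ≠ ⊥ := by
      intro e
      apply hH
      rw [← IntermediateField.fixingSubgroup_fixedField H, e,
        IntermediateField.fixingSubgroup_bot]
    have hliftbot : lift (IntermediateField.fixedField H) ≠ ⊥ := by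
      intro e
      exact hffbot (IntermediateField.lift_injective M
        (by rw [e, IntermediateField.lift_bot]))
    have hliftfin : FiniteDimensional K (lift (IntermediateField.fixedField H)) :=
      LinearEquiv.finiteDimensional
        (IntermediateField.liftAlgEquiv (IntermediateField.fixedField H)).toLinearEquiv
    have hK'lift : antiClosure K ≤ lift (IntermediateField.fixedField H) :=
      hle _ hliftbot hliftfin
    have hE'ff : E' ≤ IntermediateField.fixedField H := by
      intro x hx
      have hx1 : x.1 ∈ antiClosure K := (IntermediateField.mem_restrict hK'M x).mp hx
      exact (IntermediateField.mem_lift x).mp (hK'lift hx1)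
    calc H = IntermediateField.fixingSubgroup (IntermediateField.fixedField H) :=
          (IntermediateField.fixingSubgroup_fixedField H).symm
      _ ≤ N := by
          rw [hN, ← IntermediateField.le_iff_le]
          rw [IsGalois.fixedField_fixingSubgroup (IntermediateField.fixedField H)]
          exact hE'ff
  obtain ⟨hNprime, k, hcard⟩ := aux_group_lemma N hNtop hmaxN
  -- index N = finrank K E' = p
  have hidx : N.index = Module.finrank K E' := by
    have h1 : Nat.card N * N.index = Nat.card (M ≃ₐ[K] M) := Subgroup.card_mul_index N
    have h2 : Nat.card N = Module.finrank E' M := by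
      rw [hN]
      exact IsGalois.card_fixingSubgroup_eq_finrank E'
    have h3 : Nat.card (M ≃ₐ[K] M) = Module.finrank K M := by
      exact IsGalois.card_aut_eq_finrank K M
    have h4 : Module.finrank K E' * Module.finrank E' M = Module.finrank K M :=
      Module.finrank_mul_finrank K E' M
    have h5 : Module.finrank E' M ≠ 0 := Module.finrank_pos.ne'
    rw [h2, h3, ← h4, mul_comm (Module.finrank K E')] at h1
    exact Nat.eq_of_mul_eq_mul_left (Nat.pos_of_ne_zero h5) h1
  have hpidx : p = N.index := by rw [hidx, hfinE', hp]
  -- finrank K L divides finrank K M = Nat.card G = p ^ k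
  have hdvd : Module.finrank K L ∣ Module.finrank K M := by
    rw [hFL]
    have hF' : Module.finrank K F = Module.finrank K (IntermediateField.restrict hFM) :=
      (IntermediateField.restrict_algEquiv hFM).toLinearEquiv.finrank_eq
    rw [hF']
    exact ⟨_, (Module.finrank_mul_finrank K (IntermediateField.restrict hFM) M).symm⟩
  have hMcard : Module.finrank K M = p ^ k := by
    have h3 : Nat.card (M ≃ₐ[K] M) = Module.finrank K M := by
      exact IsGalois.card_aut_eq_finrank K M
    rw [← h3, hcard, hpidx]
  rw [hMcard] at hdvd
  have hpprime : p.Prime := hpidx ▸ hNprime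
  obtain ⟨n, _, hn⟩ := (Nat.dvd_prime_pow hpprime).mp hdvd
  exact ⟨n, hn⟩
end

section
/- If K is a field with K' ≠ K and p = [K' : K], then every polynomial over K of degree coprime to p has a root in K. -/
open IntermediateField Polynomial

theorem root_of_natDegree_coprime_of_antiClosure_ne (K : Type*) [Field K]
    (h : antiClosure K ≠ ⊥) (p : ℕ) (hp : p = Module.finrank K (antiClosure K))
    (f : K[X]) (hdeg : 1 ≤ f.natDegree) (hcop : Nat.Coprime f.natDegree p) :
    ∃ x : K, f.IsRoot x := by
  classical
  -- antiClosure is ≤ any nontrivial finite-dimensional intermediate field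
  have hle : ∀ L : IntermediateField K (AlgebraicClosure K), L ≠ ⊥ → FiniteDimensional K L →
      antiClosure K ≤ L := fun L h1 h2 => biInf_le _ ⟨h1, h2⟩
  -- there exists a nontrivial finite-dimensional intermediate field
  obtain ⟨x, hx, hxbot⟩ : ∃ x, x ∈ antiClosure K ∧ x ∉ (⊥ : IntermediateField K (AlgebraicClosure K)) := by
    by_contra hc
    push_neg at hc
    exact h (eq_bot_iff.mpr fun x hx => hc x hx)
  have hxint : IsIntegral K x := Algebra.IsIntegral.isIntegral x
  have hfd1 : FiniteDimensional K K⟮x⟯ := IntermediateField.adjoin.finiteDimensional hxint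
  have hne1 : K⟮x⟯ ≠ ⊥ := by
    intro hb
    exact hxbot (hb ▸ IntermediateField.mem_adjoin_simple_self K x)
  -- antiClosure is finite-dimensional
  have hfd : FiniteDimensional K (antiClosure K) := by
    have := hle _ hne1 hfd1
    exact FiniteDimensional.of_injective (IntermediateField.inclusion this).toLinearMap
      (IntermediateField.inclusion this).injective
  have hp2 : 2 ≤ p := by
    rcases Nat.lt_or_ge p 2 with h2 | h2
    · interval_cases p
      · exact absurd hp.symm (by simpa using Module.finrank_pos.ne')
      · exact absurd (IntermediateField.finrank_eq_one_iff.mp hp.symm) h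
    · exact h2
  -- any irreducible polynomial of degree ≥ 2 has degree divisible by p
  have key : ∀ g : K[X], Irreducible g → 2 ≤ g.natDegree → p ∣ g.natDegree := by
    intro g hg hg2
    obtain ⟨α, hα⟩ : ∃ α : AlgebraicClosure K, aeval α g = 0 := by
      have : g.degree ≠ 0 := by
        intro h0
        have := Polynomial.natDegree_eq_zero_iff_degree_le_zero.mpr (le_of_eq h0)
        omega
      obtain ⟨α, hα⟩ := IsAlgClosed.exists_aeval_eq_zero (AlgebraicClosure K) g this
      exact ⟨α, hα⟩
    have hαint : IsIntegral K α := Algebra.IsIntegral.isIntegral α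
    have hassoc : Associated (minpoly K α) g :=
      (minpoly.irreducible hαint).associated_of_dvd hg (minpoly.dvd K α hα)
    have hdeq : (minpoly K α).natDegree = g.natDegree :=
      Polynomial.natDegree_eq_of_degree_eq (Polynomial.degree_eq_degree_of_associated hassoc)
    have hfr : Module.finrank K K⟮α⟯ = g.natDegree := by
      rw [IntermediateField.adjoin.finrank hαint, hdeq]
    have hfdα : FiniteDimensional K K⟮α⟯ := IntermediateField.adjoin.finiteDimensional hαint
    have hneα : K⟮α⟯ ≠ ⊥ := by
      intro hb
      rw [hb] at hfr
      rw [IntermediateField.finrank_bot] at hfr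
      omega
    have hsub := hle _ hneα hfdα
    have := IntermediateField.finrank_bot_mul_relfinrank hsub
    rw [hp, ← hfr, ← this]
    exact Dvd.intro _ rfl
  -- main induction on the degree
  suffices H : ∀ n : ℕ, ∀ f : K[X], f.natDegree ≤ n → 1 ≤ f.natDegree →
      Nat.Coprime f.natDegree p → ∃ x : K, f.IsRoot x from H f.natDegree f le_rfl hdeg hcop
  intro n
  induction n with
  | zero => intro f hn h1 _; omega
  | succ n ih =>
    intro f hn h1 hc
    have hf0 : f ≠ 0 := fun h0 => by simp [h0] at h1
    have hfu : ¬IsUnit f := fun hu => by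
      have := Polynomial.natDegree_eq_zero_of_isUnit hu
      omega
    obtain ⟨g, hgirr, hgdvd⟩ := WfDvdMonoid.exists_irreducible_factor hfu hf0
    rcases Nat.lt_or_ge g.natDegree 2 with hglt | hge
    · -- g is linear, so it has a root, which is a root of f
      have hg1 : g.natDegree = 1 := by
        have := hgirr.natDegree_pos
        omega
      have hgdeg : g.degree = 1 := by
        rw [Polynomial.degree_eq_natDegree hgirr.ne_zero, hg1]
        rfl
      obtain ⟨x, hx⟩ := Polynomial.exists_root_of_degree_eq_one hgdeg
      exact ⟨x, hx.dvd hgdvd⟩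
    · -- g has degree ≥ 2, divisible by p; divide it out and recurse
      obtain ⟨q, hq⟩ := hgdvd
      have hq0 : q ≠ 0 := fun h0 => hf0 (by rw [hq, h0, mul_zero])
      have hdadd : f.natDegree = g.natDegree + q.natDegree := by
        rw [hq, Polynomial.natDegree_mul hgirr.ne_zero hq0]
      obtain ⟨k, hk⟩ := key g hgirr hge
      have hq1 : 1 ≤ q.natDegree := by
        by_contra hq1
        push_neg at hq1
        have : q.natDegree = 0 := by omega
        have hpd : p ∣ f.natDegree := by rw [hdadd, this, hk]; exact ⟨k, by ring⟩
        have := Nat.eq_one_of_dvd_coprimes hc.symm dvd_rfl hpd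
        omega
      have hqc : Nat.Coprime q.natDegree p := by
        have : f.natDegree = p * k + q.natDegree := by omega
        rw [this] at hc
        exact (Nat.coprime_add_mul_right_left _ _ _).mp
          (by rwa [Nat.add_comm, Nat.mul_comm] at hc)
      have hqn : q.natDegree ≤ n := by omega
      obtain ⟨x, hx⟩ := ih q hqn hq1 hqc
      exact ⟨x, hx.dvd ⟨g, by rw [hq, mul_comm]⟩⟩
end

section
/- If K is a field with K' ≠ K and p = [K' : K], then K contains all p-th roots of unity (i.e., the polynomial X^p − 1 splits over K). -/
open IntermediateField Polynomial

theorem roots_of_unity_mem_of_antiClosure_ne (K : Type*) [Field K]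
    (h : antiClosure K ≠ ⊥) (p : ℕ) (hp : p = Module.finrank K (antiClosure K)) :
    ((X : K[X]) ^ p - 1).Splits := by
  set Kbar := AlgebraicClosure K
  -- the anti-closure is contained in every nontrivial finite extension
  have key : ∀ L : IntermediateField K Kbar, L ≠ ⊥ → FiniteDimensional K L →
      antiClosure K ≤ L := fun L h1 h2 => iInf₂_le L ⟨h1, h2⟩
  -- `antiClosure K` is finite dimensional and nontrivial, so `p ≥ 2`
  obtain ⟨x, hxK', hxbot⟩ : ∃ x ∈ antiClosure K, x ∉ (⊥ : IntermediateField K Kbar) := by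
    by_contra hc
    push_neg at hc
    exact h (le_bot_iff.mp hc)
  have hxint : IsIntegral K x := Algebra.IsIntegral.isIntegral x
  have hfinx : FiniteDimensional K K⟮x⟯ := IntermediateField.adjoin.finiteDimensional hxint
  have hxne : (K⟮x⟯ : IntermediateField K Kbar) ≠ ⊥ := fun hb =>
    hxbot (hb ▸ IntermediateField.mem_adjoin_simple_self K x)
  have hK'fin : FiniteDimensional K (antiClosure K) :=
    FiniteDimensional.of_injective
      (IntermediateField.inclusion (key _ hxne hfinx)).toLinearMap
      (IntermediateField.inclusion_injective (key _ hxne hfinx))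
  have hppos : 0 < p := hp ▸ Module.finrank_pos
  -- main argument: every root of `X^p - 1` in `Kbar` lies in `K`
  apply Splits.of_splits_map (algebraMap K Kbar)
  · exact IsAlgClosed.splits _
  · intro a ha
    by_contra hmem
    -- `K⟮a⟯` is a nontrivial finite extension, so `antiClosure K ≤ K⟮a⟯`
    have haK : a ∉ (⊥ : IntermediateField K Kbar) := by rwa [IntermediateField.mem_bot]
    have haint : IsIntegral K a := Algebra.IsIntegral.isIntegral a
    have hfina : FiniteDimensional K K⟮a⟯ := IntermediateField.adjoin.finiteDimensional haint
    have hane : (K⟮a⟯ : IntermediateField K Kbar) ≠ ⊥ := fun hb =>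
      haK (hb ▸ IntermediateField.mem_adjoin_simple_self K a)
    have hle : antiClosure K ≤ K⟮a⟯ := key _ hane hfina
    have hple : p ≤ Module.finrank K K⟮a⟯ := by
      rw [hp]
      exact LinearMap.finrank_le_finrank_of_injective
        (f := (IntermediateField.inclusion hle).toLinearMap)
        (IntermediateField.inclusion_injective hle)
    -- `a` is a root of `X^p - 1`
    have haroot : (aeval a) ((X : K[X]) ^ p - 1) = 0 := by
      have := (mem_roots'.mp ha).2
      rw [IsRoot, eval_map, ← aeval_def] at this
      exact this
    -- minpoly of `a` divides `X^p - 1 = (geom sum) * (X - 1)`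
    have hfact : ((X : K[X]) ^ p - 1) = (∑ i ∈ Finset.range p, (X : K[X]) ^ i) * (X - 1) :=
      (geom_sum_mul X p).symm
    have hdvd : minpoly K a ∣ (∑ i ∈ Finset.range p, (X : K[X]) ^ i) * (X - 1) := by
      rw [← hfact]; exact minpoly.dvd K a haroot
    have hprime : Prime (minpoly K a) :=
      (minpoly.irreducible haint).prime
    rcases hprime.2.2 _ _ hdvd with hd1 | hd2
    · -- degree ≤ p - 1, contradiction with p ≤ finrank
      have hgne : (∑ i ∈ Finset.range p, (X : K[X]) ^ i) ≠ 0 := by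
        intro h0
        have : ((X : K[X]) ^ p - 1) = 0 := by rw [hfact, h0, zero_mul]
        exact Polynomial.X_pow_sub_C_ne_zero hppos (1 : K) (by simpa using this)
      have hdeg : (minpoly K a).natDegree ≤
          (∑ i ∈ Finset.range p, (X : K[X]) ^ i).natDegree :=
        Polynomial.natDegree_le_of_dvd hd1 hgne
      have hgdeg : (∑ i ∈ Finset.range p, (X : K[X]) ^ i).natDegree = p - 1 := by
        have h1 : ((X : K[X]) ^ p - 1).natDegree = p := by
          simpa using (Polynomial.natDegree_X_pow_sub_C (n := p) (r := (1 : K)))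
        have hxne1 : ((X : K[X]) - 1) ≠ 0 := Polynomial.X_sub_C_ne_zero (1 : K)
        have := Polynomial.natDegree_mul hgne hxne1
        rw [← hfact, h1] at this
        have h2 : ((X : K[X]) - 1).natDegree = 1 := by
          simpa using Polynomial.natDegree_X_sub_C (1 : K)
        omega
      have hfr : Module.finrank K K⟮a⟯ = (minpoly K a).natDegree :=
        IntermediateField.adjoin.finrank haint
      omega
    · -- minpoly = X - 1, so a = 1 ∈ K, contradiction
      have heq : minpoly K a = X - C (1 : K) := by
        have hirr : Irreducible ((X : K[X]) - C 1) := Polynomial.irreducible_X_sub_C 1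
        refine Polynomial.eq_of_monic_of_associated (minpoly.monic haint)
          (Polynomial.monic_X_sub_C 1) ?_
        exact (hprime.irreducible.associated_of_dvd hirr (by simpa using hd2))
      have : a = 1 := by
        have := minpoly.aeval K a
        rw [heq] at this
        simpa [sub_eq_zero] using this
      exact hmem ⟨1, by simpa using this.symm⟩
end

section
/- If K is a field with K' ≠ K and p = [K' : K], then every element of K has a p-th root in K'. -/
open IntermediateField

theorem exists_pow_root_in_antiClosure (K : Type*) [Field K]
    (h : antiClosure K ≠ ⊥) (p : ℕ) (hp : p = Module.finrank K (antiClosure K))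
    (x : K) :
    ∃ y ∈ antiClosure K, y ^ p = algebraMap K (AlgebraicClosure K) x := by
  classical
  set A := antiClosure K with hA
  -- A is contained in every nontrivial finite-dimensional intermediate field
  have hle : ∀ L : IntermediateField K (AlgebraicClosure K),
      L ≠ ⊥ → FiniteDimensional K L → A ≤ L := by
    intro L h1 h2
    exact biInf_le _ (Set.mem_setOf.mpr ⟨h1, h2⟩)
  -- A is finite dimensional: pick an element of A outside ⊥
  obtain ⟨a, haA, hab⟩ : ∃ a ∈ A, a ∉ (⊥ : IntermediateField K (AlgebraicClosure K)) := by
    by_contra hc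
    push_neg at hc
    exact h (le_antisymm hc bot_le)
  have hinta : IsIntegral K a := Algebra.IsIntegral.isIntegral a
  have hfda : FiniteDimensional K K⟮a⟯ := adjoin.finiteDimensional hinta
  have haadj : a ∈ K⟮a⟯ := mem_adjoin_simple_self K a
  have habot : K⟮a⟯ ≠ ⊥ := fun hb => hab (hb ▸ haadj)
  have hAle : A ≤ K⟮a⟯ := hle _ habot hfda
  haveI : FiniteDimensional K K⟮a⟯.toSubmodule := hfda
  have hfdA : FiniteDimensional K A :=
    Submodule.finiteDimensional_of_le (S₁ := A.toSubmodule) (S₂ := K⟮a⟯.toSubmodule) hAle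
  have hp0 : 0 < p := hp ▸ Module.finrank_pos
  -- get a p-th root y in the algebraic closure
  set x' : AlgebraicClosure K := algebraMap K (AlgebraicClosure K) x with hx'
  obtain ⟨y, hy⟩ : ∃ y : AlgebraicClosure K, y ^ p = x' := by
    obtain ⟨y, hy⟩ := IsAlgClosed.exists_pow_nat_eq x' hp0
    exact ⟨y, hy⟩
  by_cases hyb : y ∈ (⊥ : IntermediateField K (AlgebraicClosure K))
  · exact ⟨y, (bot_le : (⊥ : IntermediateField K (AlgebraicClosure K)) ≤ A) hyb, hy⟩
  -- otherwise K⟮y⟯ is a nontrivial finite extension, hence contains A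
  have hinty : IsIntegral K y := Algebra.IsIntegral.isIntegral y
  have hfdy : FiniteDimensional K K⟮y⟯ := adjoin.finiteDimensional hinty
  have hyadj : y ∈ K⟮y⟯ := mem_adjoin_simple_self K y
  have hybot : K⟮y⟯ ≠ ⊥ := fun hb => hyb (hb ▸ hyadj)
  have hAy : A ≤ K⟮y⟯ := hle _ hybot hfdy
  -- the minimal polynomial of y divides X^p - C x, so [K⟮y⟯:K] ≤ p
  have hroot : Polynomial.aeval y (Polynomial.X ^ p - Polynomial.C x) = 0 := by
    simp [hy, hx']
  have hdvd : minpoly K y ∣ Polynomial.X ^ p - Polynomial.C x :=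
    minpoly.dvd K y hroot
  have hne : (Polynomial.X ^ p - Polynomial.C x : Polynomial K) ≠ 0 := by
    intro hzero
    have : (Polynomial.X ^ p - Polynomial.C x : Polynomial K).natDegree = p :=
      Polynomial.natDegree_X_pow_sub_C
    rw [hzero] at this
    simp at this
    omega
  have hdeg : (minpoly K y).natDegree ≤ p := by
    have := Polynomial.natDegree_le_of_dvd hdvd hne
    rwa [Polynomial.natDegree_X_pow_sub_C] at this
  have hfinr : Module.finrank K K⟮y⟯ ≤ p := by
    rw [adjoin.finrank hinty]
    exact hdeg
  have heq : A = K⟮y⟯ := eq_of_le_of_finrank_le hAy (by rw [← hp]; exact hfinr)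
  exact ⟨y, heq ▸ hyadj, hy⟩
end

section
/- Let K be a separably closed field of characteristic p > 0. Then K has a unique minimal nontrivial finite extension if and only if [K : K^p] = p. -/
open IntermediateField

open Polynomial

section Aux

set_option synthInstance.maxHeartbeats 1000000
set_option maxHeartbeats 2000000

variable {K : Type*} [Field K] {p : ℕ} [Fact p.Prime] [CharP K p]

private lemma pthpow_notmem_iff {a : K} :
    a ∉ (frobenius K p).fieldRange ↔ ∀ t : K, t ^ p ≠ a := by
  simp [RingHom.mem_fieldRange, frobenius_def]

private lemma pow_p_pow_injective {R : Type*} [CommRing R] [IsDomain R] [CharP R p] {n : ℕ}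
    {x w : R} (h : x ^ p ^ n = w ^ p ^ n) : x = w := by
  have h2 : (x - w) ^ p ^ n = 0 := by
    rw [sub_pow_char_pow, h, sub_self]
  exact sub_eq_zero.mp
    ((pow_eq_zero_iff (pow_ne_zero n (Fact.out : p.Prime).ne_zero)).mp h2)

private lemma pow_p_injective {R : Type*} [CommRing R] [IsDomain R] [CharP R p]
    {x w : R} (h : x ^ p = w ^ p) : x = w :=
  pow_p_pow_injective (n := 1) (by simpa using h)

private lemma isIntegral_frob (c : K) : IsIntegral ((frobenius K p).fieldRange) c := by
  refine ⟨X ^ p - C ⟨c ^ p, ⟨c, frobenius_def p c⟩⟩,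
    monic_X_pow_sub_C _ (Fact.out : p.Prime).ne_zero, ?_⟩
  simp only [eval₂_sub, eval₂_pow, eval₂_X, eval₂_C]
  exact sub_eq_zero.mpr rfl

private lemma root_notin_bot {a : K} (ha : ∀ t : K, t ^ p ≠ a) {x : AlgebraicClosure K}
    (hx : x ^ p = algebraMap K (AlgebraicClosure K) a) :
    x ∉ (⊥ : IntermediateField K (AlgebraicClosure K)) := by
  rw [IntermediateField.mem_bot]
  rintro ⟨t, rfl⟩
  rw [← map_pow] at hx
  exact ha t ((algebraMap K (AlgebraicClosure K)).injective hx)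

private lemma finrank_adjoin_root {a : K} (ha : ∀ t : K, t ^ p ≠ a) {x : AlgebraicClosure K}
    (hx : x ^ p = algebraMap K (AlgebraicClosure K) a) :
    Module.finrank K K⟮x⟯ = p := by
  have hint : IsIntegral K x := Algebra.IsIntegral.isIntegral x
  have hz : aeval x ((X : K[X]) ^ p - C a) = 0 := by
    rw [map_sub, map_pow, aeval_X, aeval_C, hx, sub_self]
  have hmin : minpoly K x = X ^ p - C a :=
    (minpoly.eq_of_irreducible_of_monic
      (X_pow_sub_C_irreducible_of_prime Fact.out ha) hz
      (monic_X_pow_sub_C a (Fact.out : p.Prime).ne_zero)).symm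
  rw [IntermediateField.adjoin.finrank hint, hmin, natDegree_X_pow_sub_C]

private lemma eq_of_le_prime {M N : IntermediateField K (AlgebraicClosure K)}
    [FiniteDimensional K N] (hle : M ≤ N) (hN : Module.finrank K N = p) (hM : M ≠ ⊥) :
    M = N := by
  have hdvd : Module.finrank K M ∣ p := by
    rw [← hN]
    exact ⟨_, (IntermediateField.finrank_bot_mul_relfinrank hle).symm⟩
  rcases (Fact.out : p.Prime).eq_one_or_self_of_dvd _ hdvd with h | h
  · exact absurd (IntermediateField.finrank_eq_one_iff.mp h) hM
  · exact IntermediateField.eq_of_le_of_finrank_eq hle (h.trans hN.symm)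

private lemma exists_proot_mem [IsSepClosed K] {L : IntermediateField K (AlgebraicClosure K)}
    (hL : L ≠ ⊥) :
    ∃ z ∈ L, z ∉ (⊥ : IntermediateField K (AlgebraicClosure K)) ∧
      ∃ c : K, z ^ p = algebraMap K (AlgebraicClosure K) c := by
  classical
  obtain ⟨y, hyL, hy⟩ := SetLike.exists_of_lt (hL.bot_lt : ⊥ < L)
  have hex : ∃ n, ∃ c : K, y ^ p ^ n = algebraMap K (AlgebraicClosure K) c := by
    obtain ⟨n, c, hc⟩ := IsPurelyInseparable.pow_mem K p y
    exact ⟨n, c, hc.symm⟩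
  obtain ⟨c, hc⟩ := Nat.find_spec hex
  have hn : Nat.find hex ≠ 0 := by
    intro h
    rw [h, pow_zero, pow_one] at hc
    exact hy (IntermediateField.mem_bot.mpr ⟨c, hc.symm⟩)
  refine ⟨y ^ p ^ (Nat.find hex - 1), pow_mem hyL _, ?_, c, ?_⟩
  · intro hmem
    obtain ⟨d, hd⟩ := IntermediateField.mem_bot.mp hmem
    exact Nat.find_min hex (Nat.sub_lt (Nat.pos_of_ne_zero hn) one_pos) ⟨d, hd.symm⟩
  · rw [← pow_mul, ← pow_succ, Nat.sub_add_cancel (Nat.pos_of_ne_zero hn)]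
    exact hc

private lemma pow_p_sum {c : K} {z : AlgebraicClosure K}
    (hz : z ^ p = algebraMap K (AlgebraicClosure K) c) (s : Finset ℕ) (r : ℕ → K) :
    (∑ i ∈ s, algebraMap K (AlgebraicClosure K) (r i) * z ^ i) ^ p
      = algebraMap K (AlgebraicClosure K) (∑ i ∈ s, r i ^ p * c ^ i) := by
  rw [sum_pow_char, map_sum]
  refine Finset.sum_congr rfl fun i _ => ?_
  rw [mul_pow, ← pow_mul, mul_comm i p, pow_mul, hz, ← map_pow, ← map_pow, ← map_mul]

private lemma root_mem_of_adjoin {a c : K} {x z : AlgebraicClosure K}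
    (hx : x ^ p = algebraMap K (AlgebraicClosure K) a)
    (hz : z ^ p = algebraMap K (AlgebraicClosure K) c)
    (hmem : a ∈ Algebra.adjoin ((frobenius K p).fieldRange) {c})
    {L : IntermediateField K (AlgebraicClosure K)} (hzL : z ∈ L) : x ∈ L := by
  rw [Algebra.adjoin_singleton_eq_range_aeval] at hmem
  obtain ⟨q, hq0⟩ := hmem
  have hq : aeval c q = a := hq0
  have hcoeff : ∀ i : ℕ, ∃ t : K, t ^ p = (q.coeff i : K) := fun i => by
    obtain ⟨t, ht⟩ := RingHom.mem_fieldRange.mp (q.coeff i).2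
    exact ⟨t, by rw [← ht, frobenius_def]⟩
  choose r hr using hcoeff
  have haeval : (∑ i ∈ q.support, r i ^ p * c ^ i) = a := by
    rw [← hq, aeval_def, eval₂_eq_sum, Polynomial.sum_def]
    exact Finset.sum_congr rfl fun i _ => by rw [hr i]; rfl
  have hxx : x = ∑ i ∈ q.support, algebraMap K (AlgebraicClosure K) (r i) * z ^ i := by
    have h1 := pow_p_sum hz q.support r
    rw [haeval, ← hx] at h1
    exact pow_p_injective h1.symm
  rw [hxx]
  exact sum_mem fun i _ => mul_mem (L.algebraMap_mem (r i)) (pow_mem hzL i)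

private lemma adjoin_of_root_mem {a b : K} {x y : AlgebraicClosure K}
    (hx : x ^ p = algebraMap K (AlgebraicClosure K) a)
    (hy : y ^ p = algebraMap K (AlgebraicClosure K) b)
    (hmem : y ∈ K⟮x⟯) : b ∈ Algebra.adjoin ((frobenius K p).fieldRange) {a} := by
  have hint : IsIntegral K x := Algebra.IsIntegral.isIntegral x
  have hmem' : y ∈ Algebra.adjoin K {x} := by
    rw [← IntermediateField.mem_toSubalgebra,
      IntermediateField.adjoin_simple_toSubalgebra_of_isAlgebraic hint.isAlgebraic] at hmem
    exact hmem
  rw [Algebra.adjoin_singleton_eq_range_aeval] at hmem'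
  obtain ⟨g, hg0⟩ := hmem'
  have hg : aeval x g = y := hg0
  have h1 : algebraMap K (AlgebraicClosure K) b
      = algebraMap K (AlgebraicClosure K) (∑ i ∈ g.support, g.coeff i ^ p * a ^ i) := by
    rw [← hy, ← hg, aeval_def, eval₂_eq_sum, Polynomial.sum_def]
    exact pow_p_sum hx g.support g.coeff
  have hb : b = ∑ i ∈ g.support, g.coeff i ^ p * a ^ i :=
    (algebraMap K (AlgebraicClosure K)).injective h1
  rw [hb]
  refine Subalgebra.sum_mem _ fun i _ => Subalgebra.mul_mem _ ?_
    (Subalgebra.pow_mem _ (Algebra.self_mem_adjoin_singleton _ _) i)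
  exact Subalgebra.algebraMap_mem _ (⟨g.coeff i ^ p, ⟨g.coeff i, frobenius_def p (g.coeff i)⟩⟩ :
    ((frobenius K p).fieldRange))

private lemma adjoin_top_of_finrank {c : K}
    (hfr : Module.finrank ((frobenius K p).fieldRange) K = p)
    (hc : c ∉ (frobenius K p).fieldRange) :
    (((frobenius K p).fieldRange : Subfield K))⟮c⟯ = ⊤ := by
  set F := (frobenius K p).fieldRange with hF
  haveI : FiniteDimensional F K :=
    FiniteDimensional.of_finrank_pos (hfr ▸ (Fact.out : p.Prime).pos)
  have hdvd : Module.finrank F F⟮c⟯ ∣ p :=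
    ⟨Module.finrank F⟮c⟯ K, by rw [← hfr, ← Module.finrank_mul_finrank F F⟮c⟯ K]⟩
  rcases (Fact.out : p.Prime).eq_one_or_self_of_dvd _ hdvd with h | h
  · exfalso
    have hbot : F⟮c⟯ = ⊥ := IntermediateField.finrank_eq_one_iff.mp h
    have hcE : c ∈ F⟮c⟯ := IntermediateField.mem_adjoin_simple_self F c
    rw [hbot, IntermediateField.mem_bot] at hcE
    obtain ⟨t, ht⟩ := hcE
    exact hc (ht ▸ t.2)
  · exact IntermediateField.eq_of_le_of_finrank_eq le_top
      (by rw [h, IntermediateField.finrank_top', hfr])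

private lemma finrank_eq_p_of_adjoin_top {a : K} (ha : ∀ t : K, t ^ p ≠ a)
    (htop : (((frobenius K p).fieldRange : Subfield K))⟮a⟯ = ⊤) :
    Module.finrank ((frobenius K p).fieldRange) K = p := by
  set F := (frobenius K p).fieldRange with hF
  set ap : F := ⟨a ^ p, ⟨a, frobenius_def p a⟩⟩ with hap
  have hint : IsIntegral F a := isIntegral_frob a
  have hirr : Irreducible (X ^ p - C ap) := by
    refine X_pow_sub_C_irreducible_of_prime Fact.out fun d hd => ?_
    have hd' : (d : K) ^ p = a ^ p := by
      have := congrArg (Subtype.val) hd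
      simpa [hap] using this
    have hda : (d : K) = a := pow_p_injective hd'
    obtain ⟨t, ht⟩ := d.2
    exact ha t (by rw [← frobenius_def, ht, hda])
  have hz0 : aeval a ((X : (↥F)[X]) ^ p - C ap) = 0 := by
    rw [map_sub, map_pow, aeval_X, aeval_C]
    show a ^ p - (ap : K) = 0
    exact sub_eq_zero.mpr rfl
  have hmin : minpoly F a = X ^ p - C ap :=
    (minpoly.eq_of_irreducible_of_monic hirr hz0
      (monic_X_pow_sub_C _ (Fact.out : p.Prime).ne_zero)).symm
  have h1 : Module.finrank F F⟮a⟯ = p := by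
    rw [IntermediateField.adjoin.finrank hint, hmin, natDegree_X_pow_sub_C]
  rw [← IntermediateField.finrank_top' (F := F) (E := K), ← htop, h1]

end Aux

set_option synthInstance.maxHeartbeats 1000000
set_option maxHeartbeats 2000000

theorem sepClosed_antiClosure_ne_iff_finrank_frobenius_eq
    (K : Type*) [Field K] (p : ℕ) [Fact p.Prime] [CharP K p] [IsSepClosed K] :
    antiClosure K ≠ ⊥ ↔ Module.finrank ((frobenius K p).fieldRange) K = p := by
  classical
  have hp : p.Prime := Fact.out
  constructor
  · intro hne
    by_cases hperf : ∀ a : K, a ∈ (frobenius K p).fieldRange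
    · exfalso
      apply hne
      rw [eq_bot_iff]
      refine le_trans le_top ?_
      intro x _
      obtain ⟨n, c, hc0⟩ := IsPurelyInseparable.pow_mem K p x
      have hc : x ^ p ^ n = algebraMap K (AlgebraicClosure K) c := hc0.symm
      have hroot : ∀ (m : ℕ) (c : K), ∃ t : K, t ^ p ^ m = c := by
        intro m
        induction m with
        | zero => exact fun c => ⟨c, by simp⟩
        | succ m ih =>
          intro c
          obtain ⟨s, hs⟩ := RingHom.mem_fieldRange.mp (hperf c)
          rw [frobenius_def] at hs
          obtain ⟨t, ht⟩ := ih s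
          exact ⟨t, by rw [pow_succ, pow_mul, ht, hs]⟩
      obtain ⟨t, ht⟩ := hroot n c
      rw [IntermediateField.mem_bot]
      refine ⟨t, ?_⟩
      refine (pow_p_pow_injective (p := p) (n := n) ?_).symm
      rw [hc, ← ht, map_pow]
    · push_neg at hperf
      obtain ⟨a, ha0⟩ := hperf
      have ha : ∀ t : K, t ^ p ≠ a := pthpow_notmem_iff.mp ha0
      obtain ⟨x, hx⟩ := IsAlgClosed.exists_pow_nat_eq (algebraMap K (AlgebraicClosure K) a) hp.pos
      have hxb := root_notin_bot ha hx
      have hint : IsIntegral K x := Algebra.IsIntegral.isIntegral x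
      haveI : FiniteDimensional K K⟮x⟯ := IntermediateField.adjoin.finiteDimensional hint
      have hKx : K⟮x⟯ ≠ ⊥ := fun h => hxb (h ▸ IntermediateField.mem_adjoin_simple_self K x)
      have hle : antiClosure K ≤ K⟮x⟯ := biInf_le _ ⟨hKx, inferInstance⟩
      have hEq : antiClosure K = K⟮x⟯ := eq_of_le_prime hle (finrank_adjoin_root ha hx) hne
      apply finrank_eq_p_of_adjoin_top ha
      rw [eq_top_iff]
      intro b _
      by_cases hb0 : b ∈ (frobenius K p).fieldRange
      · exact IntermediateField.algebraMap_mem _ (⟨b, hb0⟩ : ((frobenius K p).fieldRange))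
      · have hb : ∀ t : K, t ^ p ≠ b := pthpow_notmem_iff.mp hb0
        obtain ⟨y, hy⟩ := IsAlgClosed.exists_pow_nat_eq (algebraMap K (AlgebraicClosure K) b) hp.pos
        have hyb := root_notin_bot hb hy
        have hinty : IsIntegral K y := Algebra.IsIntegral.isIntegral y
        haveI : FiniteDimensional K K⟮y⟯ := IntermediateField.adjoin.finiteDimensional hinty
        have hKy : K⟮y⟯ ≠ ⊥ := fun h => hyb (h ▸ IntermediateField.mem_adjoin_simple_self K y)
        have hley : antiClosure K ≤ K⟮y⟯ := biInf_le _ ⟨hKy, inferInstance⟩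
        have hEqy : antiClosure K = K⟮y⟯ := eq_of_le_prime hley (finrank_adjoin_root hb hy) hne
        have hmem : y ∈ K⟮x⟯ := by
          rw [← hEq, hEqy]
          exact IntermediateField.mem_adjoin_simple_self K y
        exact IntermediateField.algebra_adjoin_le_adjoin _ _ (adjoin_of_root_mem hx hy hmem)
  · intro hfr
    obtain ⟨a, ha0⟩ : ∃ a : K, a ∉ (frobenius K p).fieldRange := by
      by_contra hcon
      push_neg at hcon
      have hbij : Function.Bijective (algebraMap ((frobenius K p).fieldRange) K) :=
        ⟨(algebraMap ((frobenius K p).fieldRange) K).injective, fun b => ⟨⟨b, hcon b⟩, rfl⟩⟩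
      have heq := (LinearEquiv.ofBijective (Algebra.linearMap ((frobenius K p).fieldRange) K)
        hbij).finrank_eq
      rw [Module.finrank_self, hfr] at heq
      exact hp.one_lt.ne heq
    have ha : ∀ t : K, t ^ p ≠ a := pthpow_notmem_iff.mp ha0
    obtain ⟨x, hx⟩ := IsAlgClosed.exists_pow_nat_eq (algebraMap K (AlgebraicClosure K) a) hp.pos
    have hxb := root_notin_bot ha hx
    have hsub : K⟮x⟯ ≤ antiClosure K := by
      refine le_iInf₂ fun L hL => ?_
      obtain ⟨hLne, hLfin⟩ := hL
      rw [IntermediateField.adjoin_le_iff, Set.singleton_subset_iff]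
      obtain ⟨z, hzL, hzb, c, hzc⟩ := exists_proot_mem (p := p) hLne
      have hc : c ∉ (frobenius K p).fieldRange := by
        intro hcF
        obtain ⟨t, ht⟩ := RingHom.mem_fieldRange.mp hcF
        rw [frobenius_def] at ht
        apply hzb
        rw [IntermediateField.mem_bot]
        refine ⟨t, ?_⟩
        refine (pow_p_injective (p := p) ?_).symm
        rw [hzc, ← ht, map_pow]
      have htop := adjoin_top_of_finrank hfr hc
      have hcint : IsIntegral ((frobenius K p).fieldRange) c := isIntegral_frob c
      have hadj : a ∈ Algebra.adjoin ((frobenius K p).fieldRange) {c} := by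
        have h1 : a ∈ (((frobenius K p).fieldRange : Subfield K))⟮c⟯ := by
          rw [htop]; trivial
        rwa [← IntermediateField.mem_toSubalgebra,
          IntermediateField.adjoin_simple_toSubalgebra_of_isAlgebraic hcint.isAlgebraic] at h1
      exact root_mem_of_adjoin hx hzc hadj hzL
    intro hbot
    exact hxb (hbot ▸ hsub (IntermediateField.mem_adjoin_simple_self K x))
end

section
/- Let K be a field of characteristic ≠ 2 in which −1 is a square, and let a, b ∈ K*. Suppose there exist t, x, y, z ∈ K with t² + a x² − b y² − a b z² = 0 and 2(t x − b y z) = 1 (i.e., √a is a norm from K(√a,√b) to K(√a)). Then the norm form of the quaternion algebra Q(a,b) is isotropic over K. -/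
theorem quaternion_norm_isotropic_of_sqrt_norm
    (K : Type*) [Field K] (hchar : ringChar K ≠ 2)
    (s : K) (hs : s ^ 2 = -1)
    (a b : K) (ha : a ≠ 0) (hb : b ≠ 0)
    (t x y z : K)
    (h1 : t ^ 2 + a * x ^ 2 - b * y ^ 2 - a * b * z ^ 2 = 0)
    (h2 : 2 * (t * x - b * y * z) = 1) :
    ∃ T X Y Z : K, ¬(T = 0 ∧ X = 0 ∧ Y = 0 ∧ Z = 0) ∧
      T ^ 2 - a * X ^ 2 - b * Y ^ 2 + a * b * Z ^ 2 = 0 := by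
  have hs0 : s ≠ 0 := fun h => by simp [h] at hs
  refine ⟨t, s * x, y, s * z, ?_, ?_⟩
  · rintro ⟨ht, hx, hy, hz⟩
    have hx' : x = 0 := by
      rcases mul_eq_zero.mp hx with h | h
      · exact absurd h hs0
      · exact h
    have hz' : z = 0 := by
      rcases mul_eq_zero.mp hz with h | h
      · exact absurd h hs0
      · exact h
    rw [ht, hx', hy, hz'] at h2
    simp at h2
  · have : t ^ 2 - a * (s * x) ^ 2 - b * y ^ 2 + a * b * (s * z) ^ 2
        = t ^ 2 + a * x ^ 2 - b * y ^ 2 - a * b * z ^ 2 := by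
      ring_nf
      rw [hs]; ring
    rw [this, h1]
end

section
/- Let K be a field of characteristic ≠ 2 such that every element of K is either a square or the negative of a square, and suppose sums of two squares are squares in K (K pythagorean), and −1 is not a square. Then every element of K(i) is a square in K(i), where i² = −1; consequently K(i) has no quadratic extension. -/
open Polynomial

theorem sq_surjective_adjoin_i_of_pythagorean
    (K : Type*) [Field K] (hchar : ringChar K ≠ 2)
    (hni : ¬ ∃ r : K, r ^ 2 = -1)
    (hsq : ∀ a : K, (∃ r : K, a = r ^ 2) ∨ (∃ r : K, -a = r ^ 2))
    (hpyth : ∀ s t : K, ∃ r : K, s ^ 2 + t ^ 2 = r ^ 2) :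
    ∀ z : AdjoinRoot ((X : K[X]) ^ 2 + 1), ∃ w : AdjoinRoot ((X : K[X]) ^ 2 + 1),
      w ^ 2 = z := by
  have h2 : (2 : K) ≠ 0 := Ring.two_ne_zero hchar
  have hni' : ∀ x y : K, x ^ 2 = - y ^ 2 → y = 0 := by
    intro x y hxy
    by_contra hy
    refine hni ⟨x / y, ?_⟩
    field_simp
    linear_combination hxy
  have key : ∀ c d : K, ∃ e f : K, e ^ 2 - f ^ 2 = c ∧ 2 * e * f = d := by
    intro c d
    obtain ⟨r, hr⟩ := hpyth c d
    obtain ⟨t, ht⟩ : ∃ t : K, t ^ 4 = c ^ 2 + d ^ 2 := by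
      rcases hsq r with ⟨t, ht⟩ | ⟨t, ht⟩
      · exact ⟨t, by linear_combination (-(r + t ^ 2)) * ht - hr⟩
      · exact ⟨t, by linear_combination (r - t ^ 2) * ht - hr⟩
    have hss : (t ^ 2) ^ 2 = c ^ 2 + d ^ 2 := by linear_combination ht
    have hAorB : (∃ e : K, 2 * e ^ 2 = c + t ^ 2) ∨ (∃ e : K, 2 * e ^ 2 = t ^ 2 - c) := by
      by_contra hcon
      push_neg at hcon
      obtain ⟨hA, hB⟩ := hcon
      obtain ⟨u, hu⟩ := (hsq ((c + t ^ 2) / 2)).resolve_left (by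
        rintro ⟨u, hu⟩
        apply hA u
        field_simp at hu
        linear_combination -hu)
      obtain ⟨v, hv⟩ := (hsq ((t ^ 2 - c) / 2)).resolve_left (by
        rintro ⟨v, hv⟩
        apply hB v
        field_simp at hv
        linear_combination -hv)
      obtain ⟨w, hw⟩ := hpyth u v
      field_simp at hu hv
      have h4 : 2 * w ^ 2 = 2 * (- t ^ 2) := by rw [← hw]; linear_combination -hu - hv
      have hwt : w ^ 2 = - t ^ 2 := mul_left_cancel₀ h2 h4
      have ht0 : t = 0 := hni' w t hwt
      have hcd : c ^ 2 + d ^ 2 = 0 := by rw [← hss, ht0]; ring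
      have hc0 : c = 0 := hni' d c (by linear_combination hcd)
      exact hA 0 (by rw [hc0, ht0]; ring)
    rcases hAorB with ⟨e, he⟩ | ⟨f, hf⟩
    · have ht2 : t ^ 2 = 2 * e ^ 2 - c := by linear_combination -he
      by_cases he0 : e = 0
      · rw [he0] at ht2
        have hcs : c = - t ^ 2 := by linear_combination ht2
        have hd2 : d ^ 2 = 0 := by linear_combination -hss + (t ^ 2 - c) * hcs
        have hd : d = 0 := by simpa using hd2
        exact ⟨e, t, by rw [he0, hcs]; ring, by rw [he0, hd]; ring⟩
      · have hd2' : d ^ 2 = 4 * e ^ 4 - 4 * c * e ^ 2 := by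
          linear_combination -hss + (t ^ 2 + 2 * e ^ 2 - c) * ht2
        refine ⟨e, d / (2 * e), ?_, ?_⟩
        · field_simp
          linear_combination -hd2'
        · field_simp
    · have ht2 : t ^ 2 = 2 * f ^ 2 + c := by linear_combination -hf
      by_cases hf0 : f = 0
      · rw [hf0] at ht2
        have hcs : c = t ^ 2 := by linear_combination -ht2
        have hd2 : d ^ 2 = 0 := by linear_combination -hss - (t ^ 2 + c) * hcs
        have hd : d = 0 := by simpa using hd2
        exact ⟨t, f, by rw [hf0, hcs]; ring, by rw [hf0, hd]; ring⟩
      · have hd2' : d ^ 2 = 4 * f ^ 4 + 4 * c * f ^ 2 := by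
          linear_combination -hss + (t ^ 2 + 2 * f ^ 2 + c) * ht2
        refine ⟨d / (2 * f), f, ?_, ?_⟩
        · field_simp
          linear_combination hd2'
        · field_simp
  -- AdjoinRoot part
  intro z
  obtain ⟨p, rfl⟩ := AdjoinRoot.mk_surjective z
  have hmonic : ((X : K[X]) ^ 2 + 1).Monic := by
    simpa using monic_X_pow_add_C (1 : K) (two_ne_zero)
  have hdq : ((X : K[X]) ^ 2 + 1).degree = 2 := by
    simpa using degree_X_pow_add_C (by norm_num : 0 < 2) (1 : K)
  set q : K[X] := X ^ 2 + 1 with hq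
  have hdeg : (p %ₘ q).degree ≤ 1 := by
    have h := degree_modByMonic_lt p hmonic
    rw [hdq] at h
    exact Order.le_of_lt_succ (by exact_mod_cast h)
  have hi : AdjoinRoot.root q ^ 2 = -1 := by
    have h0 : AdjoinRoot.mk q q = 0 := AdjoinRoot.mk_self
    rw [hq] at h0
    simp only [map_add, map_pow, map_one, AdjoinRoot.mk_X] at h0
    linear_combination h0
  have hrep : AdjoinRoot.mk q p =
      AdjoinRoot.of q ((p %ₘ q).coeff 0) +
        AdjoinRoot.of q ((p %ₘ q).coeff 1) * AdjoinRoot.root q := by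
    conv_lhs => rw [← modByMonic_add_div p q, eq_X_add_C_of_degree_le_one hdeg]
    simp only [map_add, map_mul, AdjoinRoot.mk_self, zero_mul, mul_zero, add_zero,
      AdjoinRoot.mk_X, AdjoinRoot.mk_C]
    exact add_comm _ _
  obtain ⟨e, f, he, hf⟩ := key ((p %ₘ q).coeff 0) ((p %ₘ q).coeff 1)
  refine ⟨AdjoinRoot.of q e + AdjoinRoot.of q f * AdjoinRoot.root q, ?_⟩
  rw [hrep, ← he, ← hf]
  simp only [map_sub, map_mul, map_pow, map_ofNat]
  linear_combination (AdjoinRoot.of q f) ^ 2 * hi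
end

section
/- A real closed field R has exactly three finite-dimensional division algebras over it up to isomorphism: R itself, C = R(i), and the quaternions H = Q(−1,−1) over R. -/
open Polynomial

/-- A linearly ordered field is real closed if every nonnegative element is a square and
every polynomial of odd degree has a root. -/
def IsRealClosed' (R : Type*) [Field R] [LinearOrder R] [IsStrictOrderedRing R] : Prop :=
  (∀ x : R, 0 ≤ x → ∃ y : R, y ^ 2 = x) ∧
    ∀ f : Polynomial R, Odd f.natDegree → ∃ x : R, f.IsRoot x

section Sqrt
variable {R : Type*} [Field R] [LinearOrder R] [IsStrictOrderedRing R]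

/-- square roots of elements `a•1 + b•u` where `u*u = -1`, staying in the span of `1, u`. -/
lemma RC.sqrt_pair (hR : IsRealClosed' R) {K : Type*} [CommRing K] [Algebra R K]
    {u : K} (hu : u * u = -1) (a b : R) :
    ∃ x y : R, (x • (1:K) + y • u) * (x • (1:K) + y • u) = a • (1:K) + b • u := by
  obtain ⟨m0, hm0⟩ := hR.1 (a^2 + b^2) (by positivity)
  set m := |m0| with hm
  have hmsq : m ^ 2 = a ^ 2 + b ^ 2 := by rw [hm, sq_abs]; exact hm0
  have hmpos : 0 ≤ m := abs_nonneg _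
  have h1 : 0 ≤ (m + a) / 2 := by nlinarith [hmsq, hmpos, sq_nonneg b, sq_nonneg (m+a), sq_nonneg (m-a)]
  have h2 : 0 ≤ (m - a) / 2 := by nlinarith [hmsq, hmpos, sq_nonneg b, sq_nonneg (m+a), sq_nonneg (m-a)]
  obtain ⟨x, hx⟩ := hR.1 _ h1
  obtain ⟨y, hy⟩ := hR.1 _ h2
  have expand : ∀ s t : R, (s • (1:K) + t • u) * (s • (1:K) + t • u)
      = (s*s - t*t) • (1:K) + (2*(s*t)) • u := by
    intro s t
    simp only [Algebra.smul_def, map_mul, map_sub, map_ofNat, mul_one]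
    linear_combination (algebraMap R K t * algebraMap R K t) * hu
  have hxy : (2*(x*y)) * (2*(x*y)) = b * b := by linear_combination (4*y^2) * hx + (2*(m+a)) * hy + hmsq
  have hcases : 2*(x*y) = b ∨ 2*(x*y) = -b := by
    exact mul_self_eq_mul_self_iff.mp hxy
  have hxxyy : x*x - y*y = a := by linear_combination hx - hy
  rcases hcases with h | h
  · exact ⟨x, y, by rw [expand, hxxyy, h]⟩
  · refine ⟨x, -y, ?_⟩
    rw [expand]
    rw [show x * -y = -(x*y) by ring, show x * x - -y * -y = x*x - y*y by ring, hxxyy,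
      show (2 : R) * -(x*y) = -(2*(x*y)) by ring, h, neg_neg]
end Sqrt

section LemA
variable {R : Type*} [Field R] [LinearOrder R] [IsStrictOrderedRing R] {D : Type*} [DivisionRing D] [Algebra R D]

lemma RC.exists_sq_neg_one (hR : IsRealClosed' R) {x : D} (hx : IsIntegral R x)
    (h2 : (minpoly R x).natDegree = 2) :
    ∃ (u : D) (cc dd : R), u * u = -1 ∧ dd ≠ 0 ∧ x = cc • (1:D) + dd • u := by
  have hmonic : (minpoly R x).Monic := minpoly.monic hx
  set p := minpoly R x with hp
  set b := p.coeff 1 with hb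
  set c := p.coeff 0 with hc
  have hlead : p.coeff 2 = 1 := by
    have := hmonic.coeff_natDegree
    rwa [h2] at this
  have hx2 : x * x + b • x + c • (1:D) = 0 := by
    have hs := Polynomial.aeval_eq_sum_range (p := p) x
    rw [minpoly.aeval R x, h2] at hs
    rw [Finset.sum_range_succ, Finset.sum_range_succ, Finset.sum_range_one] at hs
    rw [hlead] at hs
    simp only [pow_zero, pow_one, one_smul, pow_two] at hs
    calc x * x + b • x + c • (1:D) = c • (1:D) + b • x + x * x := by abel
      _ = 0 := hs.symm
  -- complete the square
  set t := b/2 with ht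
  set δ := x + t • (1:D) with hδdef
  set r := t*t - c with hr
  have comm1 : x * (t • (1:D)) = t • x := by rw [mul_smul_comm, mul_one]
  have comm2 : (t • (1:D)) * x = t • x := by rw [smul_mul_assoc, one_mul]
  have comm3 : (t • (1:D)) * (t • (1:D)) = (t*t) • (1:D) := by
    rw [smul_mul_assoc, one_mul, smul_smul]
  have hδ : δ * δ = r • (1:D) := by
    have expand : δ * δ = x * x + b • x + (t*t) • (1:D) := by
      rw [hδdef]
      simp only [add_mul, mul_add, comm1, comm2, comm3]
      rw [show (b:R) = t + t by rw [ht]; ring, add_smul]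
      abel
    have h3 : x * x + b • x = -(c • (1:D)) := by
      rw [← add_eq_zero_iff_eq_neg]; exact hx2
    rw [expand, hr, sub_smul, h3]
    abel
  have key : ∀ w : R, x ≠ w • (1:D) := by
    intro w hw
    have hxt : x = algebraMap R D w := by rw [Algebra.algebraMap_eq_smul_one]; exact hw
    have h5 := minpoly.eq_X_sub_C D w
    rw [← hxt, ← hp] at h5
    rw [h5, Polynomial.natDegree_X_sub_C] at h2
    norm_num at h2
  rcases le_or_gt 0 r with hr0 | hr0
  · exfalso
    obtain ⟨s, hs⟩ := hR.1 r hr0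
    have hss : (s*s) • (1:D) = r • (1:D) := by rw [← pow_two, hs]
    have hfac : (δ - s • (1:D)) * (δ + s • (1:D)) = 0 := by
      have comm4 : δ * (s • (1:D)) = s • δ := by rw [mul_smul_comm, mul_one]
      have comm5 : (s • (1:D)) * δ = s • δ := by rw [smul_mul_assoc, one_mul]
      have comm6 : (s • (1:D)) * (s • (1:D)) = (s*s) • (1:D) := by
        rw [smul_mul_assoc, one_mul, smul_smul]
      simp only [sub_mul, mul_add, comm4, comm5, comm6, hδ, hss]
      abel
    rcases mul_eq_zero.mp hfac with h | h
    · have h6 : δ = s • (1:D) := by rwa [sub_eq_zero] at h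
      exact key (s - t) (by rw [sub_smul, ← h6, hδdef]; abel)
    · have h6 : δ = -(s • (1:D)) := by rwa [add_eq_zero_iff_eq_neg] at h
      exact key (-s - t) (by rw [sub_smul, neg_smul, ← h6, hδdef]; abel)
  · obtain ⟨s, hs⟩ := hR.1 (-r) (by linarith)
    have hrne : r ≠ 0 := ne_of_lt hr0
    have hsne : s ≠ 0 := by
      intro h; rw [h] at hs; norm_num at hs; exact hrne (by linarith)
    refine ⟨s⁻¹ • δ, -t, s, ?_, hsne, ?_⟩
    · have h7 : (s⁻¹ • δ) * (s⁻¹ • δ) = (s⁻¹ * s⁻¹) • (δ * δ) := smul_mul_smul_comm _ _ _ _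
      have h8 : s⁻¹ * s⁻¹ * r = -1 := by
        rw [← mul_inv, ← pow_two, hs]
        field_simp
      rw [h7, hδ, smul_smul, h8, neg_smul, one_smul]
    · rw [smul_smul, mul_inv_cancel₀ hsne, one_smul, hδdef, neg_smul]
      abel

end LemA

section Span
variable {R : Type*} [Field R] [LinearOrder R] [IsStrictOrderedRing R]

lemma RC.exists_repr_pair {A : Type*} [DivisionRing A] [Algebra R A] [FiniteDimensional R A]
    (h2 : Module.finrank R A = 2) {u : A} (hu : u ∉ Set.range (algebraMap R A)) (z : A) :
    ∃ a b : R, z = a • (1:A) + b • u := by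
  have hli : LinearIndependent R ![(1:A), u] := by
    rw [LinearIndependent.pair_iff' (one_ne_zero)]
    intro a ha
    exact hu ⟨a, by rw [Algebra.algebraMap_eq_smul_one]; exact ha⟩
  have hspan := hli.span_eq_top_of_card_eq_finrank (by simp [h2])
  have hz : z ∈ Submodule.span R ({(1:A), u} : Set A) := by
    have : Set.range ![(1:A), u] = {(1:A), u} := by
      simp [Matrix.range_cons, Matrix.range_empty, Set.pair_comm]
    rw [← this, hspan]
    trivial
  obtain ⟨a, b, hab⟩ := Submodule.mem_span_pair.mp hz
  exact ⟨a, b, hab.symm⟩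

lemma RC.finrank_eq_one_of_algebraMap_surjective {A : Type*} [DivisionRing A] [Algebra R A]
    (h : Function.Surjective (algebraMap R A)) : Module.finrank R A = 1 := by
  have e : LinearEquiv (RingHom.id R) R A :=
    LinearEquiv.ofBijective (Algebra.linearMap R A) ⟨(algebraMap R A).injective, h⟩
  rw [← e.finrank_eq, Module.finrank_self]

lemma RC.isSquare_of_finrank_two (hR : IsRealClosed' R) {K : Type*} [Field K] [Algebra R K]
    [FiniteDimensional R K] (h2 : Module.finrank R K = 2) (z : K) : ∃ s : K, s * s = z := by
  -- find an element with u * u = -1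
  obtain ⟨x, hx⟩ : ∃ x : K, x ∉ Set.range (algebraMap R K) := by
    by_contra h
    push_neg at h
    have : Function.Surjective (algebraMap R K) := fun y => h y
    rw [RC.finrank_eq_one_of_algebraMap_surjective this] at h2
    norm_num at h2
  have hint : IsIntegral R x := IsIntegral.of_finite R x
  have hdvd : (minpoly R x).natDegree ∣ 2 := h2 ▸ minpoly.degree_dvd hint
  have hne1 : (minpoly R x).natDegree ≠ 1 := by
    intro h1
    exact hx ((minpoly.natDegree_eq_one_iff).mp h1)
  have hpos : 0 < (minpoly R x).natDegree := minpoly.natDegree_pos hint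
  have hdeg2 : (minpoly R x).natDegree = 2 := by
    have := Nat.le_of_dvd (by norm_num) hdvd
    interval_cases h : (minpoly R x).natDegree
    · omega
    · rfl
  obtain ⟨u, cc, dd, hu, hdd, hxu⟩ := RC.exists_sq_neg_one hR hint hdeg2
  have hur : u ∉ Set.range (algebraMap R K) := by
    rintro ⟨w, rfl⟩
    have : (w*w : R) = -1 := by
      have := hu
      rw [← map_mul] at this
      have h1 : algebraMap R K (w*w) = algebraMap R K (-1) := by rw [this, map_neg, map_one]
      exact (algebraMap R K).injective h1
    nlinarith [sq_nonneg w]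
  obtain ⟨a, b, hab⟩ := RC.exists_repr_pair h2 hur z
  obtain ⟨x0, y0, hxy⟩ := RC.sqrt_pair hR hu a b
  exact ⟨x0 • (1:K) + y0 • u, by rw [hxy, hab]⟩

end Span

section CompleteSquare
variable {F : Type*} [Field F] {D : Type*} [DivisionRing D] [Algebra F D]

lemma RC.sq_smul_cases {δ : D} {s : F} (h : δ * δ = (s*s) • (1:D)) :
    δ = s • (1:D) ∨ δ = -(s • (1:D)) := by
  have comm4 : δ * (s • (1:D)) = s • δ := by rw [mul_smul_comm, mul_one]
  have comm5 : (s • (1:D)) * δ = s • δ := by rw [smul_mul_assoc, one_mul]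
  have comm6 : (s • (1:D)) * (s • (1:D)) = (s*s) • (1:D) := by
    rw [smul_mul_assoc, one_mul, smul_smul]
  have hfac : (δ - s • (1:D)) * (δ + s • (1:D)) = 0 := by
    simp only [sub_mul, mul_add, comm4, comm5, comm6, h]
    abel
  rcases mul_eq_zero.mp hfac with h' | h'
  · exact Or.inl (by rwa [sub_eq_zero] at h')
  · exact Or.inr (by rwa [add_eq_zero_iff_eq_neg] at h')

lemma RC.complete_square (h2F : (2:F) ≠ 0) {x : D} (hx : IsIntegral F x)
    (h2 : (minpoly F x).natDegree = 2) :
    ∃ (δ : D) (r : F), δ * δ = r • (1:D) ∧ δ ∉ Set.range (algebraMap F D) ∧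
      x - δ ∈ Set.range (algebraMap F D) := by
  have hmonic : (minpoly F x).Monic := minpoly.monic hx
  set p := minpoly F x with hp
  set b := p.coeff 1 with hb
  set c := p.coeff 0 with hc
  have hlead : p.coeff 2 = 1 := by
    have := hmonic.coeff_natDegree
    rwa [h2] at this
  have hx2 : x * x + b • x + c • (1:D) = 0 := by
    have hs := Polynomial.aeval_eq_sum_range (p := p) x
    rw [minpoly.aeval F x, h2] at hs
    rw [Finset.sum_range_succ, Finset.sum_range_succ, Finset.sum_range_one] at hs
    rw [hlead] at hs
    simp only [pow_zero, pow_one, one_smul, pow_two] at hs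
    calc x * x + b • x + c • (1:D) = c • (1:D) + b • x + x * x := by abel
      _ = 0 := hs.symm
  set t := b/2 with ht
  set δ := x + t • (1:D) with hδdef
  set r := t*t - c with hr
  have comm1 : x * (t • (1:D)) = t • x := by rw [mul_smul_comm, mul_one]
  have comm2 : (t • (1:D)) * x = t • x := by rw [smul_mul_assoc, one_mul]
  have comm3 : (t • (1:D)) * (t • (1:D)) = (t*t) • (1:D) := by
    rw [smul_mul_assoc, one_mul, smul_smul]
  have hδ : δ * δ = r • (1:D) := by
    have expand : δ * δ = x * x + b • x + (t*t) • (1:D) := by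
      rw [hδdef]
      simp only [add_mul, mul_add, comm1, comm2, comm3]
      rw [show (b:F) = t + t by rw [ht]; field_simp; ring, add_smul]
      abel
    have h3 : x * x + b • x = -(c • (1:D)) := by
      rw [← add_eq_zero_iff_eq_neg]; exact hx2
    rw [expand, hr, sub_smul, h3]
    abel
  have hxr : x ∉ Set.range (algebraMap F D) := by
    have h9 := (minpoly.two_le_natDegree_iff hx).mp (by rw [← hp, h2])
    intro hmem
    obtain ⟨w, hw⟩ := hmem
    exact h9 ⟨w, hw⟩
  refine ⟨δ, r, hδ, ?_, ?_⟩
  · rintro ⟨w, hw⟩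
    apply hxr
    refine ⟨w - t, ?_⟩
    rw [map_sub, hw, hδdef, Algebra.algebraMap_eq_smul_one]
    abel
  · exact ⟨-t, by rw [hδdef, map_neg, Algebra.algebraMap_eq_smul_one]; abel⟩

end CompleteSquare

section Core
variable {R : Type*} [Field R] [LinearOrder R] [IsStrictOrderedRing R]

lemma RC.natDegree_le_two_of_irreducible (hR : IsRealClosed' R) {f : R[X]}
    (hf : Irreducible f) : f.natDegree ≤ 2 := by
  classical
  by_contra hdeg
  push_neg at hdeg
  set L := f.SplittingField with hL
  haveI : IsGalois R L := ⟨⟩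
  haveI : Fact (Nat.Prime 2) := ⟨Nat.prime_two⟩
  set G := L ≃ₐ[R] L with hG
  have hcardG : Fintype.card G = Module.finrank R L := by
    rw [← Nat.card_eq_fintype_card]; exact IsGalois.card_aut_eq_finrank R L
  obtain ⟨P⟩ : Nonempty (Sylow 2 G) := inferInstance
  set F := IntermediateField.fixedField (P : Subgroup G) with hF
  have hFL : Module.finrank F L = Fintype.card (P : Subgroup G) := by
    rw [← Nat.card_eq_fintype_card]; exact IntermediateField.finrank_fixedField_eq_card _
  have htower : Module.finrank R F * Module.finrank F L = Module.finrank R L :=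
    Module.finrank_mul_finrank R F L
  have hidx : (P : Subgroup G).index * Nat.card (P : Subgroup G) = Nat.card G :=
    Subgroup.index_mul_card _
  have hPpos : 0 < Fintype.card (P : Subgroup G) := Fintype.card_pos
  have hFeq : Module.finrank R F = (P : Subgroup G).index := by
    apply Nat.eq_of_mul_eq_mul_right hPpos
    calc Module.finrank R F * Fintype.card (P : Subgroup G)
        = Module.finrank R F * Module.finrank F L := by rw [hFL]
      _ = Module.finrank R L := htower
      _ = Nat.card G := by rw [← hcardG, Nat.card_eq_fintype_card]
      _ = (P : Subgroup G).index * Nat.card (P : Subgroup G) := hidx.symm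
      _ = (P : Subgroup G).index * Fintype.card (P : Subgroup G) := by
          rw [Nat.card_eq_fintype_card]
  have hodd : ¬ 2 ∣ Module.finrank R F := by
    rw [hFeq]; exact P.not_dvd_index
  obtain ⟨α, hα⟩ := Field.exists_primitive_element R F
  have hαint : IsIntegral R α := IsIntegral.of_finite R α
  have hminα : (minpoly R α).natDegree = Module.finrank R F := by
    rw [← IntermediateField.adjoin.finrank hαint, hα, IntermediateField.finrank_top']
  have hirrα := minpoly.irreducible hαint
  have hodd' : Odd (minpoly R α).natDegree := by
    rcases Nat.even_or_odd (minpoly R α).natDegree with he | ho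
    · exact absurd (hminα ▸ he.two_dvd) hodd
    · exact ho
  obtain ⟨x₀, hx₀⟩ := hR.2 _ hodd'
  have hdeg1 : (minpoly R α).natDegree = 1 := by
    have hdvd : (X - C x₀) ∣ minpoly R α := dvd_iff_isRoot.mpr hx₀
    have hassoc : Associated (X - C x₀) (minpoly R α) :=
      (irreducible_X_sub_C x₀).associated_of_dvd hirrα hdvd
    have h5 := degree_eq_degree_of_associated hassoc
    rw [degree_X_sub_C] at h5
    exact natDegree_eq_of_degree_eq_some h5.symm
  have hF1 : Module.finrank R F = 1 := by rw [← hminα, hdeg1]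
  obtain ⟨k, hk⟩ : ∃ k : ℕ, Fintype.card G = 2 ^ k := by
    have hidx1 : (P : Subgroup G).index = 1 := by rw [← hFeq, hF1]
    obtain ⟨k, hk⟩ := IsPGroup.iff_card.mp P.2
    refine ⟨k, ?_⟩
    rw [← Nat.card_eq_fintype_card, ← hidx, hidx1, one_mul, hk]
  -- natDegree f ≤ finrank R L
  have hfy : f.natDegree ≤ Module.finrank R L := by
    have hdeg0 : f.degree ≠ 0 := by
      intro h0
      have := natDegree_eq_of_degree_eq_some (n := 0) (by exact_mod_cast h0)
      omega
    obtain ⟨y, hy⟩ := (Polynomial.SplittingField.splits f).exists_eval_eq_zero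
      (by rwa [Polynomial.degree_map])
    have hy' : Polynomial.aeval y f = 0 := by rwa [Polynomial.aeval_def, ← Polynomial.eval_map]
    have h1 : minpoly R y = f * C f.leadingCoeff⁻¹ := (minpoly.eq_of_irreducible hf hy').symm
    have h2 : (minpoly R y).natDegree ≤ Module.finrank R L := minpoly.natDegree_le y
    rwa [h1, natDegree_mul_C (inv_ne_zero (leadingCoeff_ne_zero.mpr hf.ne_zero))] at h2
  have hk2 : 2 ≤ k := by
    by_contra hklt
    push_neg at hklt
    interval_cases k <;> rw [hcardG] at hk <;> omega
  -- the degree-two subextension M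
  obtain ⟨H, hH⟩ := Sylow.exists_subgroup_card_pow_prime (G := G) 2
    (n := k - 1) (by rw [Nat.card_eq_fintype_card, hk]; exact pow_dvd_pow 2 (by omega))
  set M := IntermediateField.fixedField H with hM
  have hML : Module.finrank M L = 2 ^ (k-1) := by
    rw [IntermediateField.finrank_fixedField_eq_card, hH]
  have hRM : Module.finrank R M = 2 := by
    have h6 := Module.finrank_mul_finrank R M L
    rw [hML, ← hcardG, hk] at h6
    have h7 : (2:ℕ) ^ k = 2 * 2 ^ (k-1) := by
      rw [← pow_succ']
      congr 1
      omega
    rw [h7] at h6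
    exact Nat.eq_of_mul_eq_mul_right (by positivity) h6
  -- the degree-two extension of M inside L
  have hcard' : Fintype.card (L ≃ₐ[M] L) = 2 ^ (k-1) := by
    rw [← Nat.card_eq_fintype_card, IsGalois.card_aut_eq_finrank, hML]
  obtain ⟨H', hH'⟩ := Sylow.exists_subgroup_card_pow_prime (G := L ≃ₐ[M] L) 2
    (n := k - 2) (by rw [Nat.card_eq_fintype_card, hcard']; exact pow_dvd_pow 2 (by omega))
  set N := IntermediateField.fixedField H' with hN
  have hNL : Module.finrank N L = 2 ^ (k-2) := by
    rw [IntermediateField.finrank_fixedField_eq_card, hH']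
  have hMN : Module.finrank M N = 2 := by
    have h6 := Module.finrank_mul_finrank M N L
    rw [hNL, hML] at h6
    have h7 : (2:ℕ) ^ (k-1) = 2 * 2 ^ (k-2) := by
      rw [← pow_succ']
      congr 1
      omega
    rw [h7] at h6
    exact Nat.eq_of_mul_eq_mul_right (by positivity) h6
  obtain ⟨γ, hγ⟩ := Field.exists_primitive_element M N
  have hγint : IsIntegral M γ := IsIntegral.of_finite M γ
  have hγdeg : (minpoly M γ).natDegree = 2 := by
    rw [← IntermediateField.adjoin.finrank hγint, hγ, IntermediateField.finrank_top', hMN]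
  set γL : L := algebraMap N L γ with hγL
  have hγLdeg : (minpoly M γL).natDegree = 2 := by
    rw [hγL, minpoly.algebraMap_eq (algebraMap N L).injective]
    exact hγdeg
  haveI : CharZero M := charZero_of_injective_algebraMap (algebraMap R M).injective
  obtain ⟨δ, r, hδ, hδnr, hxδ⟩ :=
    RC.complete_square (two_ne_zero) (IsIntegral.of_finite M γL) hγLdeg
  obtain ⟨s, hs⟩ := RC.isSquare_of_finrank_two hR (K := M) hRM r
  rcases RC.sq_smul_cases (δ := δ) (s := s) (by rw [hs]; exact hδ) with h | h
  · exact hδnr ⟨s, by rw [Algebra.algebraMap_eq_smul_one]; exact h.symm⟩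
  · exact hδnr ⟨-s, by rw [map_neg, Algebra.algebraMap_eq_smul_one]; exact h.symm⟩

end Core

section Ext
variable {R : Type*} [Field R] [LinearOrder R] [IsStrictOrderedRing R]

lemma RC.finrank_le_two (hR : IsRealClosed' R) (K : Type*) [Field K] [Algebra R K]
    [FiniteDimensional R K] : Module.finrank R K ≤ 2 := by
  obtain ⟨α, hα⟩ := Field.exists_primitive_element R K
  have hint : IsIntegral R α := IsIntegral.of_finite R α
  rw [← IntermediateField.finrank_top', ← hα, IntermediateField.adjoin.finrank hint]
  exact RC.natDegree_le_two_of_irreducible hR (minpoly.irreducible hint)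

lemma RC.minpoly_natDegree_le_two (hR : IsRealClosed' R) {D : Type*} [DivisionRing D]
    [Algebra R D] [FiniteDimensional R D] (x : D) : (minpoly R x).natDegree ≤ 2 :=
  RC.natDegree_le_two_of_irreducible hR (minpoly.irreducible (IsIntegral.of_finite R x))

lemma RC.minpoly_natDegree_eq_two (hR : IsRealClosed' R) {D : Type*} [DivisionRing D]
    [Algebra R D] [FiniteDimensional R D] {x : D} (hx : x ∉ Set.range (algebraMap R D)) :
    (minpoly R x).natDegree = 2 := by
  have h1 := RC.minpoly_natDegree_le_two hR x
  have h2 := (minpoly.two_le_natDegree_iff (IsIntegral.of_finite R x)).mpr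
    (by rintro ⟨w, hw⟩; exact hx ⟨w, hw⟩)
  omega

lemma RC.equiv_base {D : Type*} [DivisionRing D] [Algebra R D] [FiniteDimensional R D]
    (h1 : Module.finrank R D = 1) : Nonempty (D ≃ₐ[R] R) := by
  have hinj : Function.Injective (Algebra.ofId R D) := (algebraMap R D).injective
  have hsurj : Function.Surjective (Algebra.ofId R D) := by
    have := (LinearMap.injective_iff_surjective_of_finrank_eq_finrank
      (f := Algebra.linearMap R D) (by rw [h1, Module.finrank_self])).mp hinj
    exact this
  exact ⟨(AlgEquiv.ofBijective (Algebra.ofId R D) ⟨hinj, hsurj⟩).symm⟩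

lemma RC.irreducible_X_sq_add_one : Irreducible ((X:R[X])^2 + 1) := by
  have hmonic : ((X:R[X])^2 + 1).Monic := by
    have := Polynomial.monic_X_pow_add_C (R := R) (1:R) (two_ne_zero)
    simpa using this
  have hdeg : ((X:R[X])^2 + 1).natDegree = 2 := by
    have := Polynomial.natDegree_X_pow_add_C (n := 2) (r := (1:R))
    simpa using this
  by_contra hirr
  obtain ⟨c₁, c₂, h0, h1⟩ :=
    (hmonic.not_irreducible_iff_exists_add_mul_eq_coeff hdeg).mp hirr
  have hc0 : ((X:R[X])^2 + 1).coeff 0 = 1 := by simp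
  have hc1 : ((X:R[X])^2 + 1).coeff 1 = 0 := by
    simp [Polynomial.coeff_X_pow, Polynomial.coeff_one]
  rw [hc0] at h0
  rw [hc1] at h1
  nlinarith [sq_nonneg c₁, sq_nonneg c₂]

lemma RC.finrank_adjoinRoot : Module.finrank R (AdjoinRoot ((X:R[X])^2 + 1)) = 2 := by
  have h0 : ((X:R[X])^2 + 1) ≠ 0 := RC.irreducible_X_sq_add_one.ne_zero
  haveI : Fact (Irreducible ((X:R[X])^2 + 1)) := ⟨RC.irreducible_X_sq_add_one⟩
  have := (AdjoinRoot.powerBasis h0).finrank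
  rw [this, AdjoinRoot.powerBasis_dim]
  have := Polynomial.natDegree_X_pow_add_C (n := 2) (r := (1:R))
  simpa using this

lemma RC.equiv_adjoinRoot (hR : IsRealClosed' R) {D : Type*} [Field D] [Algebra R D]
    [FiniteDimensional R D] (h2 : Module.finrank R D = 2) :
    Nonempty (D ≃ₐ[R] AdjoinRoot ((X:R[X])^2 + 1)) := by
  haveI : Fact (Irreducible ((X:R[X])^2 + 1)) := ⟨RC.irreducible_X_sq_add_one⟩
  have h0 : ((X:R[X])^2 + 1) ≠ 0 := RC.irreducible_X_sq_add_one.ne_zero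
  haveI : FiniteDimensional R (AdjoinRoot ((X:R[X])^2 + 1)) :=
    Module.Finite.of_basis (AdjoinRoot.powerBasis h0).basis
  obtain ⟨x, hx⟩ : ∃ x : D, x ∉ Set.range (algebraMap R D) := by
    by_contra h
    push_neg at h
    have : Function.Surjective (algebraMap R D) := fun y => h y
    rw [RC.finrank_eq_one_of_algebraMap_surjective this] at h2
    norm_num at h2
  obtain ⟨u, cc, dd, hu, hdd, hxu⟩ := RC.exists_sq_neg_one hR (IsIntegral.of_finite R x)
    (RC.minpoly_natDegree_eq_two hR hx)
  have hu0 : Polynomial.aeval u ((X:R[X])^2 + 1) = 0 := by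
    rw [map_add, map_one, map_pow, Polynomial.aeval_X, pow_two, hu]
    abel
  set φ := AdjoinRoot.liftAlgHom ((X:R[X])^2 + 1) (Algebra.ofId R D) u hu0 with hφ
  have hinj : Function.Injective φ := φ.toRingHom.injective
  have hsurj : Function.Surjective φ := by
    have := (LinearMap.injective_iff_surjective_of_finrank_eq_finrank
      (f := φ.toLinearMap) (by rw [RC.finrank_adjoinRoot, h2])).mp hinj
    exact this
  exact ⟨(AlgEquiv.ofBijective φ ⟨hinj, hsurj⟩).symm⟩

end Ext

section Palais
variable {R : Type*} [Field R] [LinearOrder R] [IsStrictOrderedRing R]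

lemma RC.centralizer_repr (hR : IsRealClosed' R) {D : Type*} [DivisionRing D] [Algebra R D]
    [FiniteDimensional R D] {i : D} (hi : i * i = -1) {z : D} (hz : i * z = z * i) :
    ∃ a b : R, z = a • (1:D) + b • i := by
  have hcomm : ∀ x ∈ ({i, z} : Set D), ∀ y ∈ ({i, z} : Set D), x * y = y * x := by
    rintro x (rfl | rfl) y (rfl | rfl) <;> first | rfl | exact hz | exact hz.symm
  set A := Algebra.adjoin R ({i, z} : Set D) with hA
  letI : CommRing A := Algebra.adjoinCommRingOfComm R hcomm
  letI : IsDomain A := Function.Injective.isDomain (A.val.toRingHom) Subtype.coe_injective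
  haveI : FiniteDimensional R A := inferInstance
  have hfield : IsField A :=
    isField_of_isIntegral_of_isField' (Field.toIsField R)
  letI : Field A := hfield.toField
  have himem : i ∈ A := Algebra.subset_adjoin (by simp)
  have hzmem : z ∈ A := Algebra.subset_adjoin (by simp)
  set u' : A := ⟨i, himem⟩ with hu'
  have hu'sq : u' * u' = -1 := by
    apply Subtype.coe_injective
    push_cast
    exact hi
  have hu'range : u' ∉ Set.range (algebraMap R A) := by
    rintro ⟨w, hw⟩
    have hiw : i = algebraMap R D w := by
      have := congrArg (A.val) hw
      simpa using this.symm
    have : (w * w : R) = -1 := by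
      apply (algebraMap R D).injective
      rw [map_mul, map_neg, map_one, ← hiw, hi]
    nlinarith [sq_nonneg w]
  have h2 : Module.finrank R A = 2 := by
    refine le_antisymm (RC.finrank_le_two hR A) ?_
    calc 2 ≤ (minpoly R u').natDegree :=
          (minpoly.two_le_natDegree_iff (IsIntegral.of_finite R u')).mpr
            (by rintro ⟨w, hw⟩; exact hu'range ⟨w, hw⟩)
      _ ≤ Module.finrank R A := minpoly.natDegree_le u'
  obtain ⟨a, b, hab⟩ := RC.exists_repr_pair h2 hu'range ⟨z, hzmem⟩
  refine ⟨a, b, ?_⟩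
  have := congrArg (A.val) hab
  simpa using this

lemma RC.equiv_quaternion (hR : IsRealClosed' R) {D : Type*} [DivisionRing D] [Algebra R D]
    [FiniteDimensional R D] (hnc : ∃ a b : D, a * b ≠ b * a) :
    Nonempty (D ≃ₐ[R] QuaternionAlgebra R (-1) 0 (-1)) := by
  obtain ⟨a0, b0, hab⟩ := hnc
  have ha0r : a0 ∉ Set.range (algebraMap R D) := by
    rintro ⟨w, rfl⟩
    exact hab (Algebra.commutes w b0)
  obtain ⟨i, cc, dd, hi, hdd, ha0⟩ := RC.exists_sq_neg_one hR (IsIntegral.of_finite R a0)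
    (RC.minpoly_natDegree_eq_two hR ha0r)
  have hinz : i ≠ 0 := by
    intro h
    rw [h, zero_mul] at hi
    exact one_ne_zero (by simpa using hi.symm : (1:D) = 0)
  have hbi : i * b0 ≠ b0 * i := by
    intro h
    apply hab
    rw [ha0, add_mul, mul_add, smul_mul_assoc, smul_mul_assoc, mul_smul_comm, mul_smul_comm,
      one_mul, mul_one, h]
  have hii : ∀ z : D, i*(i*z) = -z := by intro z; rw [← mul_assoc, hi, neg_one_mul]
  have hii' : ∀ z : D, (z*i)*i = -z := by intro z; rw [mul_assoc, hi, mul_neg_one]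
  -- decomposition
  have hplus : ∀ z : D, i * ((2:R)⁻¹ • (z - i*z*i)) = ((2:R)⁻¹ • (z - i*z*i)) * i := by
    intro z
    rw [mul_smul_comm, smul_mul_assoc]
    congr 1
    have e1 : i*(i*z*i) = -(z*i) := by rw [mul_assoc i z i, hii (z*i)]
    have e2 : (i*z*i)*i = -(i*z) := hii' (i*z)
    rw [mul_sub, sub_mul, e1, e2]
    abel
  have hminus : ∀ z : D, i * ((2:R)⁻¹ • (z + i*z*i)) = -(((2:R)⁻¹ • (z + i*z*i)) * i) := by
    intro z
    rw [mul_smul_comm, smul_mul_assoc, ← smul_neg]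
    congr 1
    have e1 : i*(i*z*i) = -(z*i) := by rw [mul_assoc i z i, hii (z*i)]
    have e2 : (i*z*i)*i = -(i*z) := hii' (i*z)
    rw [mul_add, add_mul, e1, e2]
    abel
  have hsum : ∀ z : D, (2:R)⁻¹ • (z - i*z*i) + (2:R)⁻¹ • (z + i*z*i) = z := by
    intro z
    rw [← smul_add, show (z - i*z*i) + (z + i*z*i) = z + z by abel, ← two_smul R z, smul_smul,
      inv_mul_cancel₀ (two_ne_zero), one_smul]
  -- the anti-commuting element w
  set w := (2:R)⁻¹ • (b0 + i*b0*i) with hwdef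
  have hwneg : i*w = -(w*i) := hminus b0
  have hw0 : w ≠ 0 := by
    intro h
    have h8 : b0 + i*b0*i = 0 := by
      rcases smul_eq_zero.mp h with h' | h'
      · exact absurd h' (inv_ne_zero (two_ne_zero))
      · exact h'
    have h9 : i*b0*i = -b0 := eq_neg_of_add_eq_zero_left (add_comm b0 (i*b0*i) ▸ h8)
    have h10 : (i*b0*i)*i = (-b0)*i := by rw [h9]
    rw [hii' (i*b0), neg_mul] at h10
    exact hbi (neg_injective h10)
  have half : ∀ v : D, v = -v → v = 0 := by
    intro v hv
    have h20 : (2:R) • v = 0 := by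
      rw [two_smul]
      nth_rewrite 2 [hv]
      exact add_neg_cancel _
    rcases smul_eq_zero.mp h20 with h' | h'
    · exact absurd h' two_ne_zero
    · exact h'
  -- w * w is central, equal to aw • 1 with aw < 0
  have hwwc : i*(w*w) = (w*w)*i := by
    calc i*(w*w) = (i*w)*w := by rw [mul_assoc]
      _ = -((w*i)*w) := by rw [hwneg, neg_mul]
      _ = -(w*(i*w)) := by rw [mul_assoc]
      _ = -(w*(-(w*i))) := by rw [hwneg]
      _ = w*(w*i) := by rw [mul_neg, neg_neg]
      _ = (w*w)*i := by rw [mul_assoc]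
  obtain ⟨aw, bw, hww⟩ := RC.centralizer_repr hR hi hwwc
  have hbw : bw = 0 := by
    by_contra hbwne
    have h11 : w*(w*w) = (w*w)*w := by rw [mul_assoc]
    rw [hww] at h11
    simp only [mul_add, add_mul, mul_smul_comm, smul_mul_assoc, mul_one, one_mul] at h11
    have h12 : bw • (w*i) = bw • (i*w) := add_left_cancel h11
    rw [hwneg, smul_neg] at h12
    have h13 : bw • (w*i) = 0 := half _ h12
    rcases smul_eq_zero.mp h13 with h' | h'
    · exact hbwne h'
    · rcases mul_eq_zero.mp h' with h'' | h''
      · exact hw0 h''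
      · exact hinz h''
  rw [hbw, zero_smul, add_zero] at hww
  have hawneg : aw < 0 := by
    by_contra hnn
    push_neg at hnn
    obtain ⟨s, hs⟩ := hR.1 aw hnn
    have hwi0 : w*i ≠ 0 := by
      intro h'
      rcases mul_eq_zero.mp h' with h'' | h''
      · exact hw0 h''
      · exact hinz h''
    rcases RC.sq_smul_cases (δ := w) (s := s)
        (by rw [hww, show s*s = aw by rw [← hs]; ring]) with h | h
    · have hcw : i*w = w*i := by rw [h, mul_smul_comm, smul_mul_assoc, mul_one, one_mul]
      rw [hcw] at hwneg
      exact hwi0 (half _ hwneg)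
    · have hcw : i*w = w*i := by
        rw [h, mul_neg, neg_mul, mul_smul_comm, smul_mul_assoc, mul_one, one_mul]
      rw [hcw] at hwneg
      exact hwi0 (half _ hwneg)
  obtain ⟨t, ht⟩ := hR.1 (-aw) (by linarith)
  have htne : t ≠ 0 := by
    intro h0
    rw [h0] at ht
    norm_num at ht
    linarith
  set j := t⁻¹ • w with hjdef
  have hjj : j * j = -1 := by
    rw [hjdef, smul_mul_smul_comm, hww, smul_smul]
    have h16 : t⁻¹ * t⁻¹ * aw = -1 := by
      rw [← mul_inv, ← pow_two, ht]
      have : -aw ≠ 0 := by linarith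
      field_simp
      rw [div_self (neg_ne_zero.mp this)]
    rw [h16, neg_smul, one_smul]
  have hij : i*j = -(j*i) := by rw [hjdef, mul_smul_comm, smul_mul_assoc, hwneg, smul_neg]
  -- build the quaternion basis and the algebra map
  let Q : QuaternionAlgebra.Basis D (-1 : R) 0 (-1 : R) :=
    { i := i
      j := j
      k := i*j
      i_mul_i := by rw [hi, neg_smul, one_smul, zero_smul, add_zero]
      j_mul_j := by rw [hjj, neg_smul, one_smul]
      i_mul_j := rfl
      j_mul_i := by rw [zero_smul, zero_sub, hij, neg_neg] }
  set φ := Q.liftHom with hφdef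
  letI : DivisionRing (QuaternionAlgebra R (-1 : R) 0 (-1 : R)) := Quaternion.instDivisionRing
  haveI : IsSimpleRing (QuaternionAlgebra R (-1 : R) 0 (-1 : R)) :=
    @DivisionRing.isSimpleRing _ Quaternion.instDivisionRing
  have hinj : Function.Injective φ := RingHom.injective (φ.toRingHom)
  have hiQ : i ∈ φ.range :=
    ⟨⟨0,1,0,0⟩, by simp [hφdef, QuaternionAlgebra.Basis.liftHom, QuaternionAlgebra.Basis.lift, Q]⟩
  have hjQ : j ∈ φ.range :=
    ⟨⟨0,0,1,0⟩, by simp [hφdef, QuaternionAlgebra.Basis.liftHom, QuaternionAlgebra.Basis.lift, Q]⟩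
  have hrange : ∀ z : D, z ∈ φ.range := by
    intro z
    obtain ⟨az, bz, hz1⟩ := RC.centralizer_repr hR hi (hplus z)
    set v := (2:R)⁻¹ • (z + i*z*i) with hvdef
    have hvi : i*v = -(v*i) := hminus z
    have hvcomm : i*(v*j) = (v*j)*i := by
      calc i*(v*j) = (i*v)*j := by rw [mul_assoc]
        _ = -((v*i)*j) := by rw [hvi, neg_mul]
        _ = -(v*(i*j)) := by rw [mul_assoc]
        _ = v*(j*i) := by rw [hij, mul_neg, neg_neg]
        _ = (v*j)*i := by rw [mul_assoc]
    obtain ⟨av, bv, hv1⟩ := RC.centralizer_repr hR hi hvcomm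
    have hvj : v = (av • (1:D) + bv • i) * (-j) := by
      have hjj' : j * (-j) = 1 := by rw [mul_neg, hjj, neg_neg]
      calc v = v * 1 := (mul_one v).symm
        _ = v * (j * (-j)) := by rw [hjj']
        _ = (v * j) * (-j) := by rw [mul_assoc]
        _ = (av • (1:D) + bv • i) * (-j) := by rw [hv1]
    have hz2 : z = az • (1:D) + bz • i + (av • (1:D) + bv • i) * (-j) := by
      rw [← hvj, ← hz1]
      exact (hsum z).symm
    rw [hz2]
    apply Subalgebra.add_mem
    · apply Subalgebra.add_mem
      · exact Subalgebra.smul_mem _ (Subalgebra.one_mem _) az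
      · exact Subalgebra.smul_mem _ hiQ bz
    · apply Subalgebra.mul_mem
      · apply Subalgebra.add_mem
        · exact Subalgebra.smul_mem _ (Subalgebra.one_mem _) av
        · exact Subalgebra.smul_mem _ hiQ bv
      · exact Subalgebra.neg_mem _ hjQ
  have hsurj : Function.Surjective φ := fun z => hrange z
  exact ⟨(AlgEquiv.ofBijective φ ⟨hinj, hsurj⟩).symm⟩

end Palais


/-- Frobenius' theorem for real closed fields: the finite-dimensional division algebras
over a real closed field `R` are exactly `R`, `C = R[X]/(X²+1)` and the quaternions
`ℍ[R, -1, -1]`, up to `R`-algebra isomorphism. -/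
theorem frobenius_theorem_realClosed (R : Type*) [Field R] [LinearOrder R] [IsStrictOrderedRing R]
    (hR : IsRealClosed' R) :
    (∀ (D : Type) [DivisionRing D] [Algebra R D] [FiniteDimensional R D],
        Nonempty (D ≃ₐ[R] R) ∨
        Nonempty (D ≃ₐ[R] AdjoinRoot ((X : R[X]) ^ 2 + 1)) ∨
        Nonempty (D ≃ₐ[R] QuaternionAlgebra R (-1) 0 (-1))) ∧
    IsEmpty (R ≃ₐ[R] AdjoinRoot ((X : R[X]) ^ 2 + 1)) ∧
    IsEmpty (R ≃ₐ[R] QuaternionAlgebra R (-1) 0 (-1)) ∧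
    IsEmpty (AdjoinRoot ((X : R[X]) ^ 2 + 1) ≃ₐ[R] QuaternionAlgebra R (-1) 0 (-1)) := by
  refine ⟨?_, ?_, ?_, ?_⟩
  · intro D _ _ _
    by_cases hcomm : ∀ a b : D, a * b = b * a
    · letI : Field D := { (inferInstance : DivisionRing D) with mul_comm := hcomm }
      have hle := RC.finrank_le_two hR D
      have hpos : 0 < Module.finrank R D := Module.finrank_pos
      interval_cases h : Module.finrank R D
      · exact Or.inl (RC.equiv_base h)
      · exact Or.inr (Or.inl (RC.equiv_adjoinRoot hR h))
    · push_neg at hcomm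
      exact Or.inr (Or.inr (RC.equiv_quaternion hR hcomm))
  · refine ⟨fun e => ?_⟩
    have h := e.toLinearEquiv.finrank_eq
    rw [Module.finrank_self, RC.finrank_adjoinRoot] at h
    norm_num at h
  · refine ⟨fun e => ?_⟩
    have h := e.toLinearEquiv.finrank_eq
    rw [Module.finrank_self, QuaternionAlgebra.finrank_eq_four] at h
    norm_num at h
  · refine ⟨fun e => ?_⟩
    have h := e.toLinearEquiv.finrank_eq
    rw [RC.finrank_adjoinRoot, QuaternionAlgebra.finrank_eq_four] at h
    norm_num at h
end
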